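/- arXiv:1307.8110 — 4 statements merged into one kernel-verified Lean document; each statement's English description precedes it below -/
import Mathlib

section
/- Let f : R → S be a ring homomorphism of commutative rings such that the induced map on idempotents Idem(R) → Idem(S) is surjective and has trivial kernel (i.e., the only idempotent of R mapping to 0 is 0). Then the induced map π₀(Spec S) → π₀(Spec R) on sets of connected components is bijective. -/
open PrimeSpectrum Set

/-- Join of a finite set of idempotents: an idempotent generating the same ideal. -/
lemma exists_idem_span_finset {R : Type*} [CommRing R] (s : Finset R)
    (h : ∀ e ∈ s, IsIdempotentElem e) :
    ∃ ε : R, IsIdempotentElem ε ∧ ε ∈ Ideal.span (s : Set R) ∧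
      Ideal.span (s : Set R) ≤ Ideal.span {ε} := by
  classical
  induction s using Finset.induction_on with
  | empty => exact ⟨0, IsIdempotentElem.zero, by simp, by simp [Ideal.span_le]⟩
  | @insert a s ha ih =>
    obtain ⟨ε', hε', hmem, hle⟩ := ih (fun e he => h e (Finset.mem_insert_of_mem he))
    have haa : IsIdempotentElem a := h a (Finset.mem_insert_self a s)
    refine ⟨a + ε' - a * ε', IsIdempotentElem.add_sub_mul haa hε', ?_, ?_⟩
    · have h1 : a ∈ Ideal.span (insert a (s : Set R)) := Ideal.subset_span (mem_insert a _)
      have h2 : ε' ∈ Ideal.span (insert a (s : Set R)) :=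
        Ideal.span_mono (subset_insert a _) hmem
      simpa [Finset.coe_insert] using sub_mem (add_mem h1 h2) (Ideal.mul_mem_left _ a h2)
    · rw [Finset.coe_insert, Ideal.span_insert, sup_le_iff]
      constructor
      · rw [Ideal.span_le, Set.singleton_subset_iff]
        refine Ideal.mem_span_singleton'.mpr ⟨a, ?_⟩
        have h1 := haa.eq; have h2 := hε'.eq
        linear_combination (1 - ε') * h1
      · refine hle.trans ?_
        rw [Ideal.span_le, Set.singleton_subset_iff]
        refine Ideal.mem_span_singleton'.mpr ⟨ε', ?_⟩
        have h1 := haa.eq; have h2 := hε'.eq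
        linear_combination (1 - a) * h2

/-- Idempotents lift along quotients by ideals generated by idempotents. -/
lemma exists_idem_lift {R : Type*} [CommRing R] {E : Set R}
    (hE : ∀ e ∈ E, IsIdempotentElem e) (r : R) (hr : r * r - r ∈ Ideal.span E) :
    ∃ g : R, IsIdempotentElem g ∧ g - r ∈ Ideal.span E := by
  obtain ⟨t, htE, ht⟩ := Submodule.mem_span_finite_of_mem_span hr
  obtain ⟨ε, hε, hmem, hle⟩ := exists_idem_span_finset t (fun e he => hE e (htE he))
  obtain ⟨c, hc⟩ := Ideal.mem_span_singleton'.mp (hle ht)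
  have hεE : ε ∈ Ideal.span E := Ideal.span_mono htE hmem
  unfold IsIdempotentElem at hε
  refine ⟨r - r * ε, ?_, ?_⟩
  · unfold IsIdempotentElem
    linear_combination (ε - 1) * hc + (r*r - c) * hε
  · have h : r - r * ε - r = -(r * ε) := by ring
    rw [h]
    exact neg_mem (Ideal.mul_mem_left _ r hεE)

/-- In the prime spectrum, the connected component of a point is the zero locus of
the set of idempotents belonging to it. -/
lemma connectedComponent_eq_zeroLocus' {R : Type*} [CommRing R] (p : PrimeSpectrum R) :
    connectedComponent p =
      zeroLocus {e : R | IsIdempotentElem e ∧ e ∈ p.asIdeal} := by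
  set E : Set R := {e : R | IsIdempotentElem e ∧ e ∈ p.asIdeal} with hEdef
  have hE : ∀ e ∈ E, IsIdempotentElem e := fun e he => he.1
  have hJp : Ideal.span E ≤ p.asIdeal := Ideal.span_le.mpr (fun e he => he.2)
  have hpmem : p ∈ zeroLocus E := fun e he => he.2
  apply subset_antisymm
  · intro q hq e he
    have hclopen : IsClopen (zeroLocus {e} : Set (PrimeSpectrum R)) := by
      rw [zeroLocus_eq_basicOpen_of_isIdempotentElem e he.1]
      exact isClopen_iff.mpr ⟨1 - e, he.1.one_sub, rfl⟩
    have hp : p ∈ (zeroLocus {e} : Set (PrimeSpectrum R)) := by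
      simpa [mem_zeroLocus] using he.2
    have := hclopen.connectedComponent_subset hp hq
    simpa [mem_zeroLocus] using this
  · set J : Ideal R := Ideal.span E with hJdef
    have hJne : J ≠ ⊤ := fun h => p.2.ne_top (top_le_iff.mp (h ▸ hJp))
    have : Nontrivial (R ⧸ J) := Ideal.Quotient.nontrivial_iff.mpr hJne
    have hpre : PreconnectedSpace (PrimeSpectrum (R ⧸ J)) := by
      constructor
      rw [isPreconnected_iff_subset_of_disjoint_closed]
      intro u v hu hv hcov hdisj
      have hcov' : u ∪ v = univ := Set.eq_univ_of_univ_subset hcov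
      have huv : u ∩ v = ∅ := by simpa using hdisj
      have hcompl : IsCompl u v :=
        ⟨Set.disjoint_iff_inter_eq_empty.mpr huv, codisjoint_iff.mpr hcov'⟩
      have hucl : IsClopen u := ⟨hu, hcompl.eq_compl ▸ hv.isOpen_compl⟩
      obtain ⟨e, he, hue⟩ := exists_idempotent_basicOpen_eq_of_isClopen hucl
      obtain ⟨r, hrq⟩ := Ideal.Quotient.mk_surjective e
      have hr : r * r - r ∈ Ideal.span E := by
        rw [← hJdef, ← Ideal.Quotient.eq_zero_iff_mem, map_sub, map_mul, hrq, he.eq, sub_self]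
      obtain ⟨g, hg, hgr⟩ := exists_idem_lift hE r hr
      have hgq : Ideal.Quotient.mk J g = e := by
        rw [← hrq, ← sub_eq_zero, ← map_sub, Ideal.Quotient.eq_zero_iff_mem]
        exact hgr
      have hcases : g ∈ p.asIdeal ∨ (1 - g) ∈ p.asIdeal := by
        refine p.2.mem_or_mem (show g * (1 - g) ∈ p.asIdeal from ?_)
        rw [mul_sub, mul_one, hg.eq, sub_self]
        exact p.asIdeal.zero_mem
      rcases hcases with hgp | hgp
      · -- e = 0, hence u = ∅, so univ ⊆ v
        right
        have he0 : e = 0 := by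
          rw [← hgq, Ideal.Quotient.eq_zero_iff_mem]
          exact Ideal.subset_span ⟨hg, hgp⟩
        have : u = ∅ := by
          rw [hue, he0]
          simp
        rw [this, Set.empty_union] at hcov'
        rw [hcov']
      · -- e = 1, hence u = univ
        left
        have he1 : e = 1 := by
          rw [← hgq, ← sub_eq_zero, ← (Ideal.Quotient.mk J).map_one, ← map_sub,
            Ideal.Quotient.eq_zero_iff_mem, show g - (1 : R) = -(1 - g) by ring]
          exact neg_mem (Ideal.subset_span ⟨hg.one_sub, hgp⟩)
        rw [hue, he1]
        simp [← basicOpen_eq_zeroLocus_compl]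
    have himg : IsPreconnected (zeroLocus E : Set (PrimeSpectrum R)) := by
      have h1 : IsPreconnected (Set.range (PrimeSpectrum.comap (Ideal.Quotient.mk J))) := by
        rw [← Set.image_univ]
        exact isPreconnected_univ.image _ (PrimeSpectrum.continuous_comap
          (Ideal.Quotient.mk J)).continuousOn
      have h2 : Set.range (PrimeSpectrum.comap (Ideal.Quotient.mk J)) = zeroLocus E := by
        rw [range_comap_of_surjective _ _ Ideal.Quotient.mk_surjective, Ideal.mk_ker]
        exact zeroLocus_span E
      rwa [h2] at h1
    exact himg.subset_connectedComponent hpmem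



/-- Let `f : R → S` be a ring homomorphism of commutative rings such that
the induced map on idempotents `Idem(R) → Idem(S)` is surjective and has trivial kernel
(the only idempotent of `R` mapping to `0` is `0`).  Then the induced map
`π₀(Spec S) → π₀(Spec R)` on connected components is bijective. -/
theorem pi0_spec_bijective_of_idempotents
    {R S : Type*} [CommRing R] [CommRing S] (f : R →+* S)
    (hsurj : ∀ e : S, IsIdempotentElem e → ∃ e' : R, IsIdempotentElem e' ∧ f e' = e)
    (hker : ∀ e : R, IsIdempotentElem e → f e = 0 → e = 0) :
    ∃ g : ConnectedComponents (PrimeSpectrum S) → ConnectedComponents (PrimeSpectrum R),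
      (∀ x : PrimeSpectrum S,
        g (ConnectedComponents.mk x) = ConnectedComponents.mk (PrimeSpectrum.comap f x)) ∧
      Function.Bijective g := by
  classical
  have hφ : Continuous (PrimeSpectrum.comap f) := PrimeSpectrum.continuous_comap f
  have hφ' : Continuous fun x : PrimeSpectrum S =>
      (ConnectedComponents.mk (PrimeSpectrum.comap f x)) :=
    ConnectedComponents.continuous_coe.comp hφ
  refine ⟨hφ'.connectedComponentsLift, fun x => hφ'.connectedComponentsLift_apply_coe x, ?_, ?_⟩
  · -- injective
    intro a b
    obtain ⟨x, rfl⟩ := ConnectedComponents.surjective_coe a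
    obtain ⟨y, rfl⟩ := ConnectedComponents.surjective_coe b
    rw [hφ'.connectedComponentsLift_apply_coe, hφ'.connectedComponentsLift_apply_coe]
    intro h
    rw [ConnectedComponents.coe_eq_coe] at h ⊢
    apply (connectedComponent_eq_iff_mem).mpr
    rw [connectedComponent_eq_zeroLocus']
    intro et het
    obtain ⟨e', he', hfe'⟩ := hsurj et het.1
    have h1 : e' ∈ (PrimeSpectrum.comap f y).asIdeal := by
      rw [PrimeSpectrum.comap_asIdeal]
      exact Ideal.mem_comap.mpr (hfe' ▸ het.2)
    have h2 : PrimeSpectrum.comap f x ∈ connectedComponent (PrimeSpectrum.comap f y) :=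
      h ▸ mem_connectedComponent
    rw [connectedComponent_eq_zeroLocus'] at h2
    have h3 : e' ∈ (PrimeSpectrum.comap f x).asIdeal := h2 ⟨he', h1⟩
    rw [PrimeSpectrum.comap_asIdeal, Ideal.mem_comap] at h3
    exact hfe' ▸ h3
  · -- surjective
    intro c
    obtain ⟨p, rfl⟩ := ConnectedComponents.surjective_coe c
    set E : Set R := {e : R | IsIdempotentElem e ∧ e ∈ p.asIdeal} with hEdef
    have hne : Ideal.span (f '' E) ≠ ⊤ := by
      intro htop
      have h1 : (1 : S) ∈ Ideal.span (f '' E) := htop ▸ Submodule.mem_top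
      obtain ⟨t, htE, ht⟩ := Submodule.mem_span_finite_of_mem_span h1
      obtain ⟨u, huE, hut⟩ := Finset.subset_set_image_iff.mp htE
      obtain ⟨ε, hε, hmem, hle⟩ := exists_idem_span_finset u (fun e he => (huE he).1)
      have hεp : ε ∈ p.asIdeal := Ideal.span_le.mpr (fun e he => (huE he).2) hmem
      have hts : Ideal.span (t : Set S) ≤ Ideal.span {f ε} := by
        rw [← hut, Finset.coe_image, Ideal.span_le]
        rintro _ ⟨e, he, rfl⟩
        obtain ⟨c, hc⟩ := Ideal.mem_span_singleton'.mp (hle (Ideal.subset_span he))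
        exact Ideal.mem_span_singleton'.mpr ⟨f c, by rw [← map_mul, hc]⟩
      obtain ⟨c, hc⟩ := Ideal.mem_span_singleton'.mp (hts ht)
      have hfε : f ε = 1 := by
        have hidem : f ε * f ε = f ε := by rw [← map_mul, hε.eq]
        calc f ε = (c * f ε) * f ε := by rw [hc, one_mul]
          _ = c * (f ε * f ε) := by ring
          _ = c * f ε := by rw [hidem]
          _ = 1 := hc
      have : (1 : R) - ε = 0 := hker _ hε.one_sub (by rw [map_sub, map_one, hfε, sub_self])
      have hε1 : ε = 1 := by linear_combination -this
      exact p.2.ne_top (Ideal.eq_top_iff_one _ |>.mpr (hε1 ▸ hεp))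
    obtain ⟨m, hm, hIm⟩ := Ideal.exists_le_maximal _ hne
    set x : PrimeSpectrum S := ⟨m, hm.isPrime⟩
    refine ⟨ConnectedComponents.mk x, ?_⟩
    rw [hφ'.connectedComponentsLift_apply_coe, ConnectedComponents.coe_eq_coe]
    have hx : PrimeSpectrum.comap f x ∈ connectedComponent p := by
      rw [connectedComponent_eq_zeroLocus']
      intro e he
      show e ∈ (PrimeSpectrum.comap f x).asIdeal
      rw [PrimeSpectrum.comap_asIdeal, Ideal.mem_comap]
      exact hIm (Ideal.subset_span ⟨e, he, rfl⟩)
    exact (connectedComponent_eq hx).symm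
end

section
/- Let R be an integral domain that is adequate: (1) every finitely generated ideal of R is principal, and (2) for all a, b ∈ R with a ≠ 0 there is a factorization a = a₁a₂ with (a₁, b) = R and (a₃, b) ≠ R for every non-unit factor a₃ of a₂. Then for every pair of finite free R-modules N ⊆ M of ranks n ≤ m, there exist a basis e₁,…,e_m of M, a basis f₁,…,f_n of N, and nonzero elements λ₁ | λ₂ | … | λ_n of R with f_i = λ_i e_i for 1 ≤ i ≤ n. -/
open Ideal Submodule Set Matrix

section ED
variable {R : Type*} [CommRing R] [IsDomain R] [IsBezout R]

/-- Adequacy hypothesis abbreviation. -/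
def Adeq (R : Type*) [CommRing R] : Prop :=
  ∀ a b : R, a ≠ 0 → ∃ a₁ a₂ : R, a = a₁ * a₂ ∧
      Ideal.span {a₁, b} = ⊤ ∧
      ∀ a₃ : R, ¬ IsUnit a₃ → a₃ ∣ a₂ → Ideal.span {a₃, b} ≠ ⊤

lemma exists_gen_of_finite (s : Set R) (hs : s.Finite) : ∃ g : R, Ideal.span s = Ideal.span {g} := by
  have h := IsBezout.isPrincipal_of_FG (Ideal.span s) (Submodule.fg_span hs)
  obtain ⟨g, hg⟩ := h.principal
  exact ⟨g, hg⟩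

lemma range_fin_succ {α : Type*} {k : ℕ} (f : Fin (k+1) → α) :
    Set.range f = {f 0} ∪ Set.range (fun j : Fin k => f j.succ) := by
  ext x
  constructor
  · rintro ⟨i, rfl⟩
    induction i using Fin.cases with
    | zero => exact Or.inl rfl
    | succ i => exact Or.inr ⟨i, rfl⟩
  · rintro (rfl | ⟨j, rfl⟩)
    · exact ⟨0, rfl⟩
    · exact ⟨j.succ, rfl⟩

/-- Helmer's key lemma, single-row version. -/
lemma W1 (hAd : Adeq R) {k : ℕ} {a : R} (ha : a ≠ 0) (b c : Fin k → R) (S : Set R)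
    (hS : S.Finite)
    (h : Ideal.span ({a} ∪ Set.range b ∪ Set.range c ∪ S) = ⊤) :
    ∃ t : R, Ideal.span ({a} ∪ Set.range (fun j => b j + t * c j) ∪ S) = ⊤ := by
  by_cases hc : ∀ j, c j = 0
  · refine ⟨0, ?_⟩
    rw [eq_top_iff, ← h]
    apply Ideal.span_le.2
    rintro x (((rfl | ⟨j, rfl⟩) | ⟨j, rfl⟩) | hx)
    · exact Ideal.subset_span (Or.inl (Or.inl rfl))
    · have : b j = b j + 0 * c j := by ring
      rw [this]
      exact Ideal.subset_span (Or.inl (Or.inr ⟨j, rfl⟩))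
    · rw [hc j]; exact Ideal.zero_mem _
    · exact Ideal.subset_span (Or.inr hx)
  · push_neg at hc
    obtain ⟨j₀, hj₀⟩ := hc
    obtain ⟨γ, hγ⟩ := exists_gen_of_finite (Set.range c) (Set.finite_range c)
    have hγ0 : γ ≠ 0 := by
      rintro rfl
      apply hj₀
      have : c j₀ ∈ Ideal.span ({(0:R)} : Set R) := hγ ▸ Ideal.subset_span ⟨j₀, rfl⟩
      rw [Ideal.span_singleton_eq_bot.2 rfl] at this
      simpa using this
    obtain ⟨r, s, hrs, hco, hbad⟩ := hAd a γ ha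
    obtain ⟨u, w, huw⟩ := Ideal.mem_span_pair.1 (hco ▸ Submodule.mem_top (R := R) (x := (1:R)))
    have hγmem : γ ∈ Ideal.span (Set.range c) := by rw [hγ]; exact Ideal.subset_span rfl
    obtain ⟨z, hz⟩ := (mem_span_range_iff_exists_fun R).1 hγmem
    simp only [smul_eq_mul] at hz
    set t : R := 1 - w * (∑ j, z j * b j) with hT
    refine ⟨t, ?_⟩
    set I := Ideal.span ({a} ∪ Set.range (fun j => b j + t * c j) ∪ S) with hI
    have haI : a ∈ I := Ideal.subset_span (Or.inl (Or.inl rfl))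
    have hrowI : ∀ j, b j + t * c j ∈ I := fun j => Ideal.subset_span (Or.inl (Or.inr ⟨j, rfl⟩))
    have hSI : ∀ x ∈ S, x ∈ I := fun x hx => Ideal.subset_span (Or.inr hx)
    have key : (1 : R) = (t*u)*r + ∑ j, (w * z j) * (b j + t * c j) := by
      have e1 : ∑ j, (w * z j) * (b j + t * c j)
          = w * (∑ j, z j * b j) + t * (w * γ) := by
        rw [← hz, Finset.mul_sum, Finset.mul_sum, Finset.mul_sum, ← Finset.sum_add_distrib]
        apply Finset.sum_congr rfl
        intro j _
        ring
      rw [e1]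
      have hwγ : w * γ = 1 - u * r := by linear_combination huw
      rw [hwγ, hT]
      ring
    -- (r) ⊔ I = ⊤
    have h1 : (1:R) ∈ Ideal.span {r} ⊔ I := by
      rw [key]
      refine Submodule.add_mem _ (Submodule.mem_sup_left ?_) (Submodule.mem_sup_right ?_)
      · exact Ideal.mem_span_singleton.2 (dvd_mul_left r (t*u))
      · exact Ideal.sum_mem _ fun j _ => I.mul_mem_left _ (hrowI j)
    -- (s) ⊔ I = ⊤
    have h2 : (1:R) ∈ Ideal.span {s} ⊔ I := by
      have hun : Ideal.span {s} ⊔ I = Ideal.span ({s} ∪ ({a} ∪ Set.range (fun j => b j + t * c j) ∪ S)) := by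
        rw [Ideal.span_union]
      have hfin : ({s} ∪ ({a} ∪ Set.range (fun j => b j + t * c j) ∪ S) : Set R).Finite := by
        apply Set.Finite.union (Set.finite_singleton s)
        apply Set.Finite.union
        apply Set.Finite.union (Set.finite_singleton a) (Set.finite_range _)
        exact hS
      obtain ⟨δ, hδ⟩ := exists_gen_of_finite _ hfin
      have hδs : δ ∣ s := by
        rw [← Ideal.mem_span_singleton, ← hδ]
        exact Ideal.subset_span (Or.inl rfl)
      have hδtop : Ideal.span ({δ} : Set R) = ⊤ := by
        by_contra hδtop
        have hδu : ¬ IsUnit δ := fun hu => hδtop (Ideal.span_singleton_eq_top.2 hu)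
        have hpair := hbad δ hδu hδs
        obtain ⟨h', hh'⟩ := exists_gen_of_finite {δ, γ} (Set.toFinite _)
        have hh'u : ¬ IsUnit h' := by
          intro hu
          exact hpair (by rw [hh']; exact Ideal.span_singleton_eq_top.2 hu)
        have hh'δ : h' ∣ δ := by
          rw [← Ideal.mem_span_singleton, ← hh']
          exact Ideal.subset_span (Or.inl rfl)
        have hh'γ : h' ∣ γ := by
          rw [← Ideal.mem_span_singleton, ← hh']
          exact Ideal.subset_span (Or.inr rfl)
        have hδdvd : ∀ x ∈ ({s} ∪ ({a} ∪ Set.range (fun j => b j + t * c j) ∪ S) : Set R), δ ∣ x := by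
          intro x hx
          rw [← Ideal.mem_span_singleton, ← hδ]
          exact Ideal.subset_span hx
        have hcdvd : ∀ j, h' ∣ c j := by
          intro j
          refine dvd_trans hh'γ ?_
          rw [← Ideal.mem_span_singleton, ← hγ]
          exact Ideal.subset_span ⟨j, rfl⟩
        have hbig : ({a} ∪ Set.range b ∪ Set.range c ∪ S : Set R) ⊆ ↑(Ideal.span ({h'} : Set R)) := by
          rintro x (((rfl | ⟨j, rfl⟩) | ⟨j, rfl⟩) | hx)
          · exact Ideal.mem_span_singleton.2
              (dvd_trans hh'δ (hδdvd _ (Or.inr (Or.inl (Or.inl rfl)))))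
          · have hrow : h' ∣ b j + t * c j :=
              dvd_trans hh'δ (hδdvd _ (Or.inr (Or.inl (Or.inr ⟨j, rfl⟩))))
            have hb : b j = (b j + t * c j) - t * c j := by ring
            rw [hb]
            exact Ideal.mem_span_singleton.2 (dvd_sub hrow (Dvd.dvd.mul_left (hcdvd j) t))
          · exact Ideal.mem_span_singleton.2 (hcdvd j)
          · exact Ideal.mem_span_singleton.2 (dvd_trans hh'δ (hδdvd _ (Or.inr (Or.inr hx))))
        have : (⊤ : Ideal R) ≤ Ideal.span {h'} := by
          rw [← h]
          exact Ideal.span_le.2 hbig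
        exact hh'u (Ideal.span_singleton_eq_top.1 (top_le_iff.1 this))
      rw [hun, hδ, hδtop]
      exact Submodule.mem_top
    -- combine
    obtain ⟨x₁, hx₁, y₁, hy₁, hxy₁⟩ := Submodule.mem_sup.1 h1
    obtain ⟨x₂, hx₂, y₂, hy₂, hxy₂⟩ := Submodule.mem_sup.1 h2
    obtain ⟨cr, hcr⟩ := Ideal.mem_span_singleton.1 hx₁
    obtain ⟨cs, hcs⟩ := Ideal.mem_span_singleton.1 hx₂
    have h1' : (1:R) = x₁ * x₂ + (x₁ * y₂ + y₁ * x₂ + y₁ * y₂) := by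
      have : (1:R) * 1 = (x₁ + y₁) * (x₂ + y₂) := by rw [hxy₁, hxy₂]
      rw [one_mul] at this
      rw [this]; ring
    have hmem : (1:R) ∈ I := by
      rw [h1']
      refine Submodule.add_mem _ ?_ ?_
      · have : x₁ * x₂ = a * (cr * cs) := by rw [hcr, hcs, hrs]; ring
        rw [this]
        exact I.mul_mem_right _ haI
      · refine Submodule.add_mem _ (Submodule.add_mem _ ?_ ?_) ?_
        · exact I.mul_mem_left _ hy₂
        · exact I.mul_mem_right _ hy₁
        · exact I.mul_mem_right _ hy₁
    exact (Ideal.eq_top_iff_one _).2 hmem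

/-- Helmer's lemma, multi-row version: we can add a combination of the rows of `C`
to the row `b` so that together with `a` it becomes unimodular. -/
lemma Wlem (hAd : Adeq R) {k : ℕ} {a : R} (ha : a ≠ 0) :
    ∀ {l : ℕ} (b : Fin k → R) (C : Fin l → Fin k → R),
    Ideal.span ({a} ∪ Set.range b ∪ Set.range (fun p : Fin l × Fin k => C p.1 p.2)) = ⊤ →
    ∃ q : Fin l → R, Ideal.span ({a} ∪ Set.range (fun j => b j + ∑ i, q i * C i j)) = ⊤ := by
  intro l
  induction l with
  | zero =>
    intro b C h
    refine ⟨0, ?_⟩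
    have hempty : Set.range (fun p : Fin 0 × Fin k => C p.1 p.2) = ∅ := by
      rw [Set.range_eq_empty_iff]
      exact ⟨fun p => p.1.elim0⟩
    rw [hempty, Set.union_empty] at h
    have hfun : (fun j => b j + ∑ i : Fin 0, (0 : Fin 0 → R) i * C i j) = b := by
      funext j; simp
    rw [hfun]
    exact h
  | succ l ih =>
    intro b C h
    have hsplit : Set.range (fun p : Fin (l+1) × Fin k => C p.1 p.2)
        = Set.range (C 0) ∪ Set.range (fun p : Fin l × Fin k => C p.1.succ p.2) := by
      ext x
      constructor
      · rintro ⟨⟨i, j⟩, rfl⟩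
        induction i using Fin.cases with
        | zero => exact Or.inl ⟨j, rfl⟩
        | succ i => exact Or.inr ⟨(i, j), rfl⟩
      · rintro (⟨j, rfl⟩ | ⟨⟨i, j⟩, rfl⟩)
        · exact ⟨(0, j), rfl⟩
        · exact ⟨(i.succ, j), rfl⟩
    obtain ⟨t, ht⟩ := W1 hAd ha b (C 0)
      (Set.range (fun p : Fin l × Fin k => C p.1.succ p.2)) (Set.finite_range _)
      (by rw [hsplit, ← Set.union_assoc] at h; exact h)
    obtain ⟨q', hq'⟩ := ih (fun j => b j + t * C 0 j) (fun i j => C i.succ j) ht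
    refine ⟨Fin.cons t q', ?_⟩
    have hfun : (fun j => b j + ∑ i : Fin (l+1), (Fin.cons t q' : Fin (l+1) → R) i * C i j)
        = fun j => (b j + t * C 0 j) + ∑ i : Fin l, q' i * C i.succ j := by
      funext j
      rw [Fin.sum_univ_succ]
      simp [Fin.cons_zero, Fin.cons_succ]
      ring
    rw [hfun]
    exact hq'

/-- `1 ⊕ Q` block matrix. -/
def em1 {m : ℕ} (Q : Matrix (Fin m) (Fin m) R) : Matrix (Fin (m+1)) (Fin (m+1)) R :=
  Matrix.of (Fin.cons (Fin.cons 1 0) (fun i => Fin.cons 0 (Q i)))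

section Mats
variable {m k : ℕ} (Q Q₁ Q₂ : Matrix (Fin m) (Fin m) R)

@[simp] lemma em1_00 : em1 Q 0 0 = 1 := rfl
@[simp] lemma em1_0s (j : Fin m) : em1 Q 0 j.succ = 0 := by simp [em1]
@[simp] lemma em1_s0 (i : Fin m) : em1 Q i.succ 0 = 0 := by simp [em1]
@[simp] lemma em1_ss (i j : Fin m) : em1 Q i.succ j.succ = Q i j := by simp [em1]

lemma em1_mul : em1 Q₁ * em1 Q₂ = em1 (Q₁ * Q₂) := by
  ext i j
  rw [Matrix.mul_apply, Fin.sum_univ_succ]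
  induction i using Fin.cases with
  | zero =>
    induction j using Fin.cases with
    | zero => simp
    | succ j' => simp
  | succ i' =>
    induction j using Fin.cases with
    | zero => simp
    | succ j' => simp [Matrix.mul_apply]

lemma em1_one : em1 (1 : Matrix (Fin m) (Fin m) R) = 1 := by
  ext i j
  induction i using Fin.cases with
  | zero =>
    induction j using Fin.cases with
    | zero => simp
    | succ j' => rw [Matrix.one_apply_ne (Ne.symm (Fin.succ_ne_zero j'))]; simp
  | succ i' =>
    induction j using Fin.cases with
    | zero => rw [Matrix.one_apply_ne (Fin.succ_ne_zero i')]; simp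
    | succ j' => simp [Matrix.one_apply, Fin.succ_inj]

lemma em1_mulVec (x : R) (u : Fin m → R) :
    em1 Q *ᵥ Fin.cons x u = Fin.cons x (Q *ᵥ u) := by
  funext i
  rw [Matrix.mulVec, dotProduct, Fin.sum_univ_succ]
  induction i using Fin.cases with
  | zero => simp
  | succ i' => simp [Matrix.mulVec, dotProduct]

/-- 2×2 Bézout block inside the identity. -/
def tb (a b c d : R) : Matrix (Fin (k+2)) (Fin (k+2)) R :=
  Matrix.of (Fin.cons (Fin.cons a (Fin.cons b 0))
    (Fin.cons (Fin.cons c (Fin.cons d 0))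
      (fun i => Fin.cons 0 (Fin.cons 0 (fun j => if i = j then (1:R) else 0)))))

variable (a b c d a' b' c' d' : R)

@[simp] lemma tb_00 : tb (k := k) a b c d 0 0 = a := rfl
@[simp] lemma tb_01 : tb (k := k) a b c d 0 1 = b := by rw [← Fin.succ_zero_eq_one]; simp [tb]
@[simp] lemma tb_0s (j : Fin k) : tb (k := k) a b c d 0 j.succ.succ = 0 := by simp [tb]
@[simp] lemma tb_10 : tb (k := k) a b c d 1 0 = c := by rw [← Fin.succ_zero_eq_one]; simp [tb]
@[simp] lemma tb_11 : tb (k := k) a b c d 1 1 = d := by rw [← Fin.succ_zero_eq_one]; simp [tb]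
@[simp] lemma tb_1s (j : Fin k) : tb (k := k) a b c d 1 j.succ.succ = 0 := by rw [← Fin.succ_zero_eq_one]; simp [tb]
@[simp] lemma tb_s0 (i : Fin k) : tb (k := k) a b c d i.succ.succ 0 = 0 := by simp [tb]
@[simp] lemma tb_s1 (i : Fin k) : tb (k := k) a b c d i.succ.succ 1 = 0 := by rw [← Fin.succ_zero_eq_one]; simp [tb]
@[simp] lemma tb_ss (i j : Fin k) :
    tb (k := k) a b c d i.succ.succ j.succ.succ = if i = j then (1:R) else 0 := by simp [tb]

lemma tb_mul : tb (k := k) a b c d * tb a' b' c' d'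
    = tb (a*a'+b*c') (a*b'+b*d') (c*a'+d*c') (c*b'+d*d') := by
  ext i j
  rw [Matrix.mul_apply, Fin.sum_univ_succ, Fin.sum_univ_succ]
  induction i using Fin.cases with
  | zero =>
    induction j using Fin.cases with
    | zero => simp
    | succ j₁ =>
      induction j₁ using Fin.cases with
      | zero => simp
      | succ j₂ => simp
  | succ i₁ =>
    induction i₁ using Fin.cases with
    | zero =>
      induction j using Fin.cases with
      | zero => simp
      | succ j₁ =>
        induction j₁ using Fin.cases with
        | zero => simp
        | succ j₂ => simp
    | succ i₂ =>
      induction j using Fin.cases with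
      | zero => simp [ite_mul]
      | succ j₁ =>
        induction j₁ using Fin.cases with
        | zero => simp [ite_mul]
        | succ j₂ => simp [ite_mul, Finset.sum_ite_eq]

lemma tb_one : tb (k := k) (1:R) 0 0 1 = 1 := by
  ext i j
  induction i using Fin.cases with
  | zero =>
    induction j using Fin.cases with
    | zero => simp
    | succ j₁ =>
      rw [Matrix.one_apply_ne (Ne.symm (Fin.succ_ne_zero j₁))]
      induction j₁ using Fin.cases with
      | zero => simp
      | succ j₂ => simp
  | succ i₁ =>
    induction j using Fin.cases with
    | zero =>
      rw [Matrix.one_apply_ne (Fin.succ_ne_zero i₁)]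
      induction i₁ using Fin.cases with
      | zero => simp
      | succ i₂ => simp
    | succ j₁ =>
      induction i₁ using Fin.cases with
      | zero =>
        induction j₁ using Fin.cases with
        | zero => simp
        | succ j₂ =>
          rw [Matrix.one_apply_ne (by exact fun h => (Fin.succ_ne_zero j₂) (Fin.succ_injective _ h).symm)]
          simp
      | succ i₂ =>
        induction j₁ using Fin.cases with
        | zero =>
          rw [Matrix.one_apply_ne (by exact fun h => (Fin.succ_ne_zero i₂) (Fin.succ_injective _ h))]
          simp
        | succ j₂ =>
          rw [Matrix.one_apply, tb_ss]
          by_cases hij : i₂ = j₂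
          · subst hij; simp
          · rw [if_neg hij, if_neg (fun h => hij (Fin.succ_injective _ (Fin.succ_injective _ h)))]

lemma tb_mulVec (x y : R) (u : Fin k → R) :
    tb (k := k) a b c d *ᵥ Fin.cons x (Fin.cons y u)
      = Fin.cons (a*x + b*y) (Fin.cons (c*x + d*y) u) := by
  funext i
  rw [Matrix.mulVec, dotProduct, Fin.sum_univ_succ, Fin.sum_univ_succ]
  induction i using Fin.cases with
  | zero => simp
  | succ i₁ =>
    induction i₁ using Fin.cases with
    | zero => simp
    | succ i₂ => simp [ite_mul, Finset.sum_ite_eq]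

end Mats

/-- Column clearing over a Bézout ring (Hermite property). -/
lemma CL : ∀ {m : ℕ} (v : Fin m → R), ∃ P Pinv : Matrix (Fin m) (Fin m) R,
    P * Pinv = 1 ∧ Pinv * P = 1 ∧ ∀ i, i.val ≠ 0 → Matrix.mulVec P v i = 0 := by
  intro m
  induction m with
  | zero => exact fun v => ⟨1, 1, one_mul 1, one_mul 1, fun i _ => i.elim0⟩
  | succ m ih =>
    intro v
    obtain ⟨P', Pinv', h1', h2', h3'⟩ := ih (Fin.tail v)
    have hP₁v : em1 P' *ᵥ v = Fin.cons (v 0) (P' *ᵥ Fin.tail v) := by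
      conv_lhs => rw [← Fin.cons_self_tail v]
      rw [em1_mulVec]
    set w : Fin m → R := P' *ᵥ Fin.tail v with hwdef
    cases m with
    | zero =>
      refine ⟨1, 1, one_mul 1, one_mul 1, fun i hi => absurd (Nat.lt_one_iff.1 i.isLt) hi⟩
    | succ k =>
      have hw2 : w = Fin.cons (w 0) (fun _ => (0:R)) := by
        funext i
        induction i using Fin.cases with
        | zero => rw [Fin.cons_zero]
        | succ i' => rw [Fin.cons_succ]; exact h3' _ (by simp [Fin.val_succ])
      by_cases hg' : w 0 = 0
      · refine ⟨em1 P', em1 Pinv', ?_, ?_, ?_⟩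
        · rw [em1_mul, h1', em1_one]
        · rw [em1_mul, h2', em1_one]
        · intro i hi
          rw [hP₁v]
          obtain ⟨i', rfl⟩ : ∃ i', i = Fin.succ i' := ⟨i.pred (Fin.ne_of_val_ne hi), (Fin.succ_pred i (Fin.ne_of_val_ne hi)).symm⟩
          rw [Fin.cons_succ]
          induction i' using Fin.cases with
          | zero => exact hg'
          | succ i'' => exact h3' _ (by simp [Fin.val_succ])
      · obtain ⟨g, hg⟩ := exists_gen_of_finite {v 0, w 0} (Set.toFinite _)
        have hgv : g ∣ v 0 := Ideal.mem_span_singleton.1 (hg ▸ Ideal.subset_span (Or.inl rfl))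
        have hgw : g ∣ w 0 := Ideal.mem_span_singleton.1 (hg ▸ Ideal.subset_span (Or.inr rfl))
        have hg0 : g ≠ 0 := by rintro rfl; exact hg' (zero_dvd_iff.1 hgw)
        have hgmem : g ∈ Ideal.span ({v 0, w 0} : Set R) := by
          rw [hg]; exact Ideal.subset_span rfl
        obtain ⟨α, β, hαβ⟩ := Ideal.mem_span_pair.1 hgmem
        obtain ⟨a', ha'⟩ := hgv
        obtain ⟨c', hc'⟩ := hgw
        have hdet : α * a' + β * c' = 1 := by
          apply mul_left_cancel₀ hg0
          rw [mul_one]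
          calc g * (α*a' + β*c') = α * (g * a') + β * (g * c') := by ring
          _ = α * v 0 + β * w 0 := by rw [← ha', ← hc']
          _ = g := hαβ
        refine ⟨tb α β (-c') a' * em1 P', em1 Pinv' * tb a' (-β) c' α, ?_, ?_, ?_⟩
        · rw [Matrix.mul_assoc, ← Matrix.mul_assoc (em1 P'), em1_mul, h1', em1_one,
            Matrix.one_mul, tb_mul]
          rw [show α * a' + β * c' = 1 from hdet, show α * -β + β * α = 0 by ring,
            show -c' * a' + a' * c' = 0 by ring, show -c' * -β + a' * α = 1 by linear_combination hdet,
            tb_one]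
        · rw [Matrix.mul_assoc, ← Matrix.mul_assoc (tb a' (-β) c' α), tb_mul]
          rw [show a' * α + -β * -c' = 1 by linear_combination hdet, show a' * β + -β * a' = 0 by ring,
            show c' * α + α * -c' = 0 by ring, show c' * β + α * a' = 1 by linear_combination hdet,
            tb_one, Matrix.one_mul, em1_mul, h2', em1_one]
        · intro i hi
          rw [← Matrix.mulVec_mulVec, hP₁v, hw2, tb_mulVec]
          obtain ⟨i', rfl⟩ : ∃ i', i = Fin.succ i' := ⟨i.pred (Fin.ne_of_val_ne hi), (Fin.succ_pred i (Fin.ne_of_val_ne hi)).symm⟩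
          rw [Fin.cons_succ]
          induction i' using Fin.cases with
          | zero =>
            rw [Fin.cons_zero]
            calc -c' * v 0 + a' * w 0 = -c' * (g * a') + a' * (g * c') := by rw [← ha', ← hc']
            _ = 0 := by ring
          | succ i'' => rw [Fin.cons_succ]

lemma span_range_mulVec_le {m : ℕ} (P : Matrix (Fin m) (Fin m) R) (v : Fin m → R) :
    Ideal.span (Set.range (P *ᵥ v)) ≤ Ideal.span (Set.range v) := by
  apply Ideal.span_le.2
  rintro x ⟨i, rfl⟩
  rw [SetLike.mem_coe]
  have hx : (P *ᵥ v) i = ∑ j, P i j * v j := rfl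
  rw [hx]
  exact Ideal.sum_mem _ fun j _ => Ideal.mul_mem_left _ _ (Ideal.subset_span ⟨j, rfl⟩)

/-- Key step: a matrix with unit content and nonzero first column admits a row combination
which is a unimodular row. -/
lemma lemG {m n : ℕ} (A : Matrix (Fin (m+1)) (Fin (n+1)) R) (hAd : Adeq R)
    (hcont : Ideal.span (Set.range fun p : Fin (m+1) × Fin (n+1) => A p.1 p.2) = ⊤)
    (hcol : ∃ i, A i 0 ≠ 0) :
    ∃ p : Fin (m+1) → R, Ideal.span (Set.range fun j => ∑ i, p i * A i j) = ⊤ := by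
  obtain ⟨P, Pinv, hPP, hPiP, h0⟩ := CL (fun i => A i 0)
  set B := P * A with hB
  have hAPB : A = Pinv * B := by rw [hB, ← Matrix.mul_assoc, hPiP, Matrix.one_mul]
  have hcolB : ∀ i : Fin (m+1), B i 0 = (P *ᵥ fun i => A i 0) i := by
    intro i
    simp [hB, Matrix.mul_apply, Matrix.mulVec, dotProduct]
  have hcontB : Ideal.span (Set.range fun p : Fin (m+1) × Fin (n+1) => B p.1 p.2) = ⊤ := by
    rw [eq_top_iff, ← hcont]
    apply Ideal.span_le.2
    rintro x ⟨⟨i, j⟩, rfl⟩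
    rw [SetLike.mem_coe]
    show A i j ∈ _
    have : A i j = ∑ k, Pinv i k * B k j := by
      rw [hAPB]; simp [Matrix.mul_apply]
    rw [this]
    exact Ideal.sum_mem _ fun k _ => Ideal.mul_mem_left _ _ (Ideal.subset_span ⟨(k, j), rfl⟩)
  have hB00 : B 0 0 ≠ 0 := by
    intro hB00
    obtain ⟨i₀, hi₀⟩ := hcol
    apply hi₀
    have hall : (P *ᵥ fun i => A i 0) = 0 := by
      funext i
      by_cases hiv : i.val = 0
      · have : i = 0 := Fin.ext (by simpa using hiv)
        rw [this]; rw [← hcolB 0]; exact hB00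
      · exact h0 i hiv
    have : (fun i => A i 0) = Pinv *ᵥ (P *ᵥ fun i => A i 0) := by
      rw [Matrix.mulVec_mulVec, hPiP, Matrix.one_mulVec]
    rw [hall, Matrix.mulVec_zero] at this
    exact congrFun this i₀
  have hWhyp : Ideal.span ({B 0 0} ∪ Set.range (fun j : Fin n => B 0 j.succ)
      ∪ Set.range (fun p : Fin m × Fin n => B p.1.succ p.2.succ)) = ⊤ := by
    rw [eq_top_iff, ← hcontB]
    apply Ideal.span_le.2
    rintro x ⟨⟨i, j⟩, rfl⟩
    rw [SetLike.mem_coe]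
    show B i j ∈ _
    induction i using Fin.cases with
    | zero =>
      induction j using Fin.cases with
      | zero => exact Ideal.subset_span (Or.inl (Or.inl rfl))
      | succ j' => exact Ideal.subset_span (Or.inl (Or.inr ⟨j', rfl⟩))
    | succ i' =>
      induction j using Fin.cases with
      | zero =>
        have : B i'.succ 0 = 0 := by rw [hcolB]; exact h0 _ (by simp [Fin.val_succ])
        rw [this]; exact Ideal.zero_mem _
      | succ j' => exact Ideal.subset_span (Or.inr ⟨(i', j'), rfl⟩)
  obtain ⟨q, hq⟩ := Wlem hAd hB00 (fun j : Fin n => B 0 j.succ)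
    (fun i j => B i.succ j.succ) hWhyp
  set p₁ : Fin (m+1) → R := Fin.cons 1 q with hp₁
  refine ⟨p₁ ᵥ* P, ?_⟩
  have hrow : (fun j => ∑ i, (p₁ ᵥ* P) i * A i j) = fun j => ∑ i, p₁ i * B i j := by
    funext j
    have h1 : ∑ i, (p₁ ᵥ* P) i * A i j = ((p₁ ᵥ* P) ᵥ* A) j := rfl
    have h2 : ∑ i, p₁ i * B i j = (p₁ ᵥ* B) j := rfl
    rw [h1, h2, hB, ← Matrix.vecMul_vecMul]
  rw [hrow]
  have hval : ∀ j, (∑ i, p₁ i * B i j)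
      = (Fin.cons (B 0 0) (fun j' : Fin n => B 0 j'.succ + ∑ i', q i' * B i'.succ j'.succ) : Fin (n+1) → R) j := by
    intro j
    rw [Fin.sum_univ_succ]
    induction j using Fin.cases with
    | zero =>
      rw [Fin.cons_zero]
      have : ∀ i' : Fin m, p₁ i'.succ * B i'.succ 0 = 0 := by
        intro i'
        have : B i'.succ 0 = 0 := by rw [hcolB]; exact h0 _ (by simp [Fin.val_succ])
        rw [this, mul_zero]
      rw [Finset.sum_congr rfl (fun i' _ => this i')]
      simp [hp₁]
    | succ j' =>
      rw [Fin.cons_succ]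
      simp [hp₁, Fin.cons_succ, Fin.cons_zero]
  have hfun : (fun j => ∑ i, p₁ i * B i j)
      = (Fin.cons (B 0 0) (fun j' : Fin n => B 0 j'.succ + ∑ i', q i' * B i'.succ j'.succ) : Fin (n+1) → R) := by
    funext j; exact hval j
  rw [hfun, eq_top_iff, ← hq]
  apply Ideal.span_le.2
  rintro x (rfl | ⟨j, rfl⟩)
  · exact Ideal.subset_span ⟨0, by rw [Fin.cons_zero]⟩
  · exact Ideal.subset_span ⟨j.succ, by rw [Fin.cons_succ]⟩

/-- The content ideal of `A` is realized by some row combination of `A`. -/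
lemma crux {m n : ℕ} (A : Matrix (Fin (m+1)) (Fin (n+1)) R) (hAd : Adeq R)
    (hcol : ∃ i, A i 0 ≠ 0) :
    ∃ p : Fin (m+1) → R,
      Ideal.span (Set.range fun pr : Fin (m+1) × Fin (n+1) => A pr.1 pr.2)
        ≤ Ideal.span (Set.range fun j => ∑ i, p i * A i j) := by
  obtain ⟨d, hd⟩ := exists_gen_of_finite
    (Set.range fun pr : Fin (m+1) × Fin (n+1) => A pr.1 pr.2) (Set.finite_range _)
  have hdvd : ∀ i j, d ∣ A i j := by
    intro i j
    rw [← Ideal.mem_span_singleton, ← hd]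
    exact Ideal.subset_span ⟨(i, j), rfl⟩
  have hd0 : d ≠ 0 := by
    rintro rfl
    obtain ⟨i₀, hi₀⟩ := hcol
    exact hi₀ (zero_dvd_iff.1 (hdvd i₀ 0))
  choose A₀ hA₀ using fun i j => hdvd i j
  have hcont₀ : Ideal.span (Set.range fun pr : Fin (m+1) × Fin (n+1) => A₀ pr.1 pr.2) = ⊤ := by
    have hdmem : d ∈ Ideal.span (Set.range fun pr : Fin (m+1) × Fin (n+1) => A pr.1 pr.2) := by
      rw [hd]; exact Ideal.subset_span rfl
    obtain ⟨c, hc⟩ := (mem_span_range_iff_exists_fun R).1 hdmem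
    simp only [smul_eq_mul] at hc
    have hc' : d * (∑ pr : Fin (m+1) × Fin (n+1), c pr * A₀ pr.1 pr.2) = d := by
      conv_rhs => rw [← hc]
      rw [Finset.mul_sum]
      apply Finset.sum_congr rfl
      intro pr _
      rw [hA₀ pr.1 pr.2]; ring
    have h1 : (∑ pr : Fin (m+1) × Fin (n+1), c pr * A₀ pr.1 pr.2) = 1 :=
      mul_left_cancel₀ hd0 (by rw [hc', mul_one])
    rw [eq_top_iff]
    intro x _
    have : (1:R) ∈ Ideal.span (Set.range fun pr : Fin (m+1) × Fin (n+1) => A₀ pr.1 pr.2) := by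
      rw [← h1]
      exact Ideal.sum_mem _ fun pr _ => Ideal.mul_mem_left _ _ (Ideal.subset_span ⟨pr, rfl⟩)
    exact (Ideal.eq_top_iff_one _).2 this ▸ Submodule.mem_top
  have hcol₀ : ∃ i, (Matrix.of A₀) i 0 ≠ 0 := by
    obtain ⟨i₀, hi₀⟩ := hcol
    refine ⟨i₀, fun h => hi₀ ?_⟩
    rw [hA₀ i₀ 0]
    simp only [Matrix.of_apply] at h
    rw [h, mul_zero]
  obtain ⟨p, hp⟩ := lemG (Matrix.of A₀) hAd hcont₀ hcol₀
  refine ⟨p, ?_⟩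
  rw [hd]
  apply (Ideal.span_singleton_le_iff_mem _).2
  have hp' : Ideal.span (Set.range fun j => ∑ i, p i * A₀ i j) = ⊤ := hp
  have h1mem : (1:R) ∈ Ideal.span (Set.range fun j => ∑ i, p i * A₀ i j) := by
    rw [hp']; exact Submodule.mem_top
  obtain ⟨x, hx⟩ := (mem_span_range_iff_exists_fun R).1 h1mem
  simp only [smul_eq_mul] at hx
  have : d = ∑ j, x j * (∑ i, p i * A i j) := by
    have : ∀ j, ∑ i, p i * A i j = d * ∑ i, p i * A₀ i j := by
      intro j
      rw [Finset.mul_sum]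
      apply Finset.sum_congr rfl
      intro i _
      rw [hA₀ i j]; ring
    calc d = d * 1 := (mul_one d).symm
    _ = d * ∑ j, x j * (∑ i, p i * A₀ i j) := by rw [hx]
    _ = ∑ j, x j * (d * ∑ i, p i * A₀ i j) := by rw [Finset.mul_sum]; apply Finset.sum_congr rfl; intro j _; ring
    _ = ∑ j, x j * (∑ i, p i * A i j) := by
        apply Finset.sum_congr rfl; intro j _; rw [this j]
  rw [this]
  exact Ideal.sum_mem _ fun j _ => Ideal.mul_mem_left _ _ (Ideal.subset_span ⟨j, rfl⟩)

section Bases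
variable {M : Type*} [AddCommGroup M] [Module R M]

lemma basis_map {m : ℕ} (bM : Module.Basis (Fin m) R M) (U Uinv : Matrix (Fin m) (Fin m) R)
    (h1 : U * Uinv = 1) (h2 : Uinv * U = 1) :
    ∃ e : Module.Basis (Fin m) R M, ∀ k, e k = ∑ i, U i k • bM i := by
  refine ⟨bM.map (Matrix.toLinOfInv bM bM h1 h2), ?_⟩
  intro k
  rw [Module.Basis.map_apply]
  exact Matrix.toLin_self bM bM U k

/-- Clear a linear functional along a basis: new basis on which `φ` vanishes except at `0`. -/
lemma dual_clear {m : ℕ} (bM : Module.Basis (Fin (m+1)) R M) (φ : M →ₗ[R] R) :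
    ∃ (e : Module.Basis (Fin (m+1)) R M) (g : R),
      (∀ k : Fin (m+1), k ≠ 0 → φ (e k) = 0) ∧ φ (e 0) = g ∧
      Ideal.span (Set.range fun i => φ (bM i)) = Ideal.span {g} := by
  set p : Fin (m+1) → R := fun i => φ (bM i) with hp
  obtain ⟨P, Pinv, hPP, hPiP, h0⟩ := CL p
  have hUU : P.transpose * Pinv.transpose = 1 := by
    rw [← Matrix.transpose_mul, hPiP, Matrix.transpose_one]
  have hUU' : Pinv.transpose * P.transpose = 1 := by
    rw [← Matrix.transpose_mul, hPP, Matrix.transpose_one]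
  obtain ⟨e, he⟩ := basis_map bM P.transpose Pinv.transpose hUU hUU'
  have hφe : ∀ k, φ (e k) = (P *ᵥ p) k := by
    intro k
    rw [he k, map_sum]
    have : ∀ i, φ (P.transpose i k • bM i) = P k i * p i := by
      intro i
      rw [_root_.map_smul, smul_eq_mul, Matrix.transpose_apply]
    rw [Finset.sum_congr rfl fun i _ => this i]
    rfl
  refine ⟨e, (P *ᵥ p) 0, ?_, hφe 0, ?_⟩
  · intro k hk
    rw [hφe k]
    exact h0 k (fun hv => hk (Fin.ext (by simpa using hv)))
  · apply le_antisymm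
    · have hle : Ideal.span (Set.range p) ≤ Ideal.span (Set.range (P *ᵥ p)) := by
        have : p = Pinv *ᵥ (P *ᵥ p) := by
          rw [Matrix.mulVec_mulVec, hPiP, Matrix.one_mulVec]
        calc Ideal.span (Set.range p) = Ideal.span (Set.range (Pinv *ᵥ (P *ᵥ p))) := by rw [← this]
        _ ≤ Ideal.span (Set.range (P *ᵥ p)) := span_range_mulVec_le _ _
      refine le_trans hle ?_
      apply Ideal.span_le.2
      rintro x ⟨i, rfl⟩
      rw [SetLike.mem_coe]
      by_cases hiv : i.val = 0
      · have : i = 0 := Fin.ext (by simpa using hiv)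
        rw [this]
        exact Ideal.subset_span rfl
      · rw [h0 i hiv]
        exact Ideal.zero_mem _
    · apply (Ideal.span_singleton_le_iff_mem _).2 ?_
      have : (P *ᵥ p) 0 = ∑ i, P 0 i * p i := rfl
      rw [this]
      exact Ideal.sum_mem _ fun i _ => Ideal.mul_mem_left _ _ (Ideal.subset_span ⟨i, rfl⟩)

end Bases

universe u

theorem mainED (hAd : Adeq R) :
    ∀ (n : ℕ) (M : Type u) [AddCommGroup M] [Module R M] (m : ℕ) (hnm : n ≤ m)
      (bM : Module.Basis (Fin m) R M) (N : Submodule R M) (bN : Module.Basis (Fin n) R N),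
    ∃ (e : Module.Basis (Fin m) R M) (f : Module.Basis (Fin n) R N) (lam : Fin n → R),
      (∀ i, lam i ≠ 0) ∧
      (∀ i : Fin n, ∀ h : (i : ℕ) + 1 < n, lam i ∣ lam ⟨(i : ℕ) + 1, h⟩) ∧
      (∀ i : Fin n, ((f i : M) : M) = lam i • e (Fin.castLE hnm i)) := by
  intro n
  induction n with
  | zero =>
    intro M _ _ m hnm bM N bN
    exact ⟨bM, bN, fun i => i.elim0, fun i => i.elim0, fun i => i.elim0, fun i => i.elim0⟩
  | succ n ih =>
    intro M _ _ m hnm bM N bN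
    obtain ⟨m', rfl⟩ : ∃ m', m = m' + 1 := ⟨m - 1, by omega⟩
    set A : Matrix (Fin (m'+1)) (Fin (n+1)) R :=
      Matrix.of (fun i j => bM.repr ((bN j : M)) i) with hA
    have hbN0 : ((bN 0 : M)) ≠ 0 := by
      intro hz
      exact bN.ne_zero 0 (by exact_mod_cast Subtype.ext hz)
    have hcol : ∃ i, A i 0 ≠ 0 := by
      by_contra hno
      push_neg at hno
      apply hbN0
      have : ((bN 0 : M)) = ∑ i, bM.repr ((bN 0 : M)) i • bM i := (Module.Basis.sum_repr bM _).symm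
      rw [this]
      apply Finset.sum_eq_zero
      intro i _
      rw [show bM.repr ((bN 0 : M)) i = A i 0 from rfl, hno i, zero_smul]
    obtain ⟨p, hple⟩ := crux A hAd hcol
    set I := Ideal.span (Set.range fun pr : Fin (m'+1) × Fin (n+1) => A pr.1 pr.2) with hIdef
    set φ : M →ₗ[R] R := ∑ i, p i • bM.coord i with hφdef
    have hφ : ∀ x, φ x = ∑ i, p i * bM.repr x i := by
      intro x
      rw [hφdef]
      simp [LinearMap.sum_apply, LinearMap.smul_apply, Module.Basis.coord_apply, smul_eq_mul]
    -- clear φ along bN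
    obtain ⟨f', gN, hf'ker, hf'0, hspanN⟩ := dual_clear bN (φ.comp N.subtype)
    have hspanN' : Ideal.span (Set.range fun j => φ ((bN j : M))) = Ideal.span {gN} := hspanN
    have hvalsI : ∀ j, φ ((bN j : M)) ∈ I := by
      intro j
      rw [hφ]
      exact Ideal.sum_mem _ fun i _ =>
        Ideal.mul_mem_left _ _ (Ideal.subset_span ⟨(i, j), rfl⟩)
    have hI1 : I ≤ Ideal.span {gN} := by
      have heq : (fun j => ∑ i, p i * A i j) = fun j => φ ((bN j : M)) := by
        funext j
        rw [hφ]
        rfl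
      rw [hIdef]
      calc Ideal.span (Set.range fun pr : Fin (m'+1) × Fin (n+1) => A pr.1 pr.2)
          ≤ Ideal.span (Set.range fun j => ∑ i, p i * A i j) := hple
      _ = Ideal.span (Set.range fun j => φ ((bN j : M))) := by rw [heq]
      _ = Ideal.span {gN} := hspanN'
    have hI2 : Ideal.span {gN} ≤ I := by
      apply (Ideal.span_singleton_le_iff_mem _).2
      have h1 : gN ∈ Ideal.span (Set.range fun j => φ ((bN j : M))) := by
        rw [hspanN']; exact Ideal.subset_span rfl
      have h2 : Ideal.span (Set.range fun j => φ ((bN j : M))) ≤ I := by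
        apply Ideal.span_le.2
        rintro x ⟨j, rfl⟩
        rw [SetLike.mem_coe]
        exact hvalsI j
      exact h2 h1
    have hgN0 : gN ≠ 0 := by
      rintro rfl
      obtain ⟨i₀, hi₀⟩ := hcol
      apply hi₀
      have : A i₀ 0 ∈ Ideal.span ({(0:R)} : Set R) := hI1 (Ideal.subset_span ⟨(i₀, 0), rfl⟩)
      rw [Ideal.span_singleton_eq_bot.2 rfl] at this
      simpa using this
    have hcoordI : ∀ x, x ∈ N → ∀ i, bM.repr x i ∈ I := by
      intro x hx i
      have h1 : (⟨x, hx⟩ : N) = ∑ j, bN.repr ⟨x, hx⟩ j • bN j := (Module.Basis.sum_repr bN _).symm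
      have h2 : x = ∑ j, bN.repr ⟨x, hx⟩ j • ((bN j : M)) := by
        have := congrArg (Submodule.subtype N) h1
        simp only [map_sum, _root_.map_smul, Submodule.subtype_apply] at this
        exact this
      have h3 : bM.repr x i = ∑ j, bN.repr ⟨x, hx⟩ j * A i j := by
        conv_lhs => rw [h2]
        rw [map_sum]
        simp only [_root_.map_smul]
        rw [Finsupp.finset_sum_apply]
        apply Finset.sum_congr rfl
        intro j _
        rw [Finsupp.smul_apply, smul_eq_mul]
        rfl
      rw [h3]
      exact Ideal.sum_mem _ fun j _ =>
        Ideal.mul_mem_left _ _ (Ideal.subset_span ⟨(i, j), rfl⟩)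
    have hφI : ∀ x, x ∈ N → φ x ∈ I := by
      intro x hx
      rw [hφ]
      exact Ideal.sum_mem _ fun i _ => Ideal.mul_mem_left _ _ (hcoordI x hx i)
    -- the vector y realizing the content
    set y : M := ((f' 0 : N) : M) with hydef
    have hyN : y ∈ N := (f' 0).2
    have hφy : φ y = gN := hf'0
    have hyrep : ∀ i, ∃ c, bM.repr y i = gN * c := by
      intro i
      obtain ⟨c, hc⟩ := Ideal.mem_span_singleton'.1 (hI1 (hcoordI y hyN i))
      exact ⟨c, by rw [← hc]; ring⟩
    choose cy hcy using hyrep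
    set y' : M := ∑ i, cy i • bM i with hy'def
    have hgy' : gN • y' = y := by
      rw [hy'def, Finset.smul_sum]
      have : ∀ i : Fin (m'+1), gN • cy i • bM i = bM.repr y i • bM i := by
        intro i
        rw [smul_smul, ← hcy i]
      rw [Finset.sum_congr rfl fun i _ => this i]
      exact Module.Basis.sum_repr bM y
    have hφy' : φ y' = 1 := by
      apply mul_left_cancel₀ hgN0
      rw [mul_one]
      calc gN * φ y' = φ (gN • y') := by rw [_root_.map_smul, smul_eq_mul]
      _ = φ y := by rw [hgy']
      _ = gN := hφy
    -- clear φ along bM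
    obtain ⟨e', gM, he'ker, he'0, hspanM⟩ := dual_clear bM φ
    have hgMu : IsUnit gM := by
      have h1 : (1:R) ∈ Ideal.span ({gM} : Set R) := by
        rw [← hspanM]
        have : (1:R) = φ y' := hφy'.symm
        rw [this, hy'def, map_sum]
        apply Ideal.sum_mem
        intro i _
        rw [_root_.map_smul, smul_eq_mul]
        exact Ideal.mul_mem_left _ _ (Ideal.subset_span ⟨i, rfl⟩)
      exact isUnit_of_dvd_one (Ideal.mem_span_singleton.1 h1)
    have hφrepr : ∀ x, φ x = e'.repr x 0 * gM := by
      intro x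
      conv_lhs => rw [← Module.Basis.sum_repr e' x]
      rw [map_sum, Fin.sum_univ_succ]
      have hz : ∀ k : Fin m', φ (e'.repr x k.succ • e' k.succ) = 0 := by
        intro k
        rw [_root_.map_smul, he'ker k.succ (Fin.succ_ne_zero k), smul_zero]
      rw [Finset.sum_congr rfl fun k _ => hz k]
      rw [_root_.map_smul, he'0, smul_eq_mul]
      simp
    -- kernel of φ and its basis
    set K := LinearMap.ker φ with hKdef
    have hmemK : ∀ z, z ∈ K ↔ φ z = 0 := fun z => LinearMap.mem_ker
    set vK : Fin m' → K := fun k => ⟨e' k.succ, (hmemK _).2 (he'ker k.succ (Fin.succ_ne_zero k))⟩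
      with hvKdef
    have hvKind : LinearIndependent R vK := by
      apply LinearIndependent.of_comp K.subtype
      exact e'.linearIndependent.comp Fin.succ (Fin.succ_injective _)
    have hvKspan : ⊤ ≤ Submodule.span R (Set.range vK) := by
      rintro ⟨x, hx⟩ _
      have hphix : φ x = 0 := (hmemK x).1 hx
      have h0' : e'.repr x 0 = 0 := by
        have := (hφrepr x).symm.trans hphix
        obtain ⟨uu, huu⟩ := hgMu
        rw [← huu] at this
        exact (Units.mul_left_eq_zero uu).1 this
      have hxs : x = ∑ k : Fin m', e'.repr x k.succ • e' k.succ := by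
        conv_lhs => rw [← Module.Basis.sum_repr e' x]
        rw [Fin.sum_univ_succ, h0', zero_smul, zero_add]
      have heq : (⟨x, hx⟩ : K) = ∑ k, e'.repr x k.succ • vK k := by
        apply Subtype.ext
        rw [Submodule.coe_sum]
        simp only [SetLike.val_smul, hvKdef]
        exact hxs
      rw [heq]
      exact Submodule.sum_mem _ fun k _ =>
        Submodule.smul_mem _ _ (Submodule.subset_span ⟨k, rfl⟩)
    set eK : Module.Basis (Fin m') R K := Module.Basis.mk hvKind hvKspan with heKdef
    -- N ∩ ker φ inside K and its basis
    set NK : Submodule R K := N.comap K.subtype with hNKdef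
    have hf'succK : ∀ k : Fin n, ((f' k.succ : N) : M) ∈ K :=
      fun k => (hmemK _).2 (hf'ker k.succ (Fin.succ_ne_zero k))
    set vNK : Fin n → NK := fun k => ⟨⟨((f' k.succ : N) : M), hf'succK k⟩, (f' k.succ).2⟩
      with hvNKdef
    have hindM : LinearIndependent R (fun j : Fin (n+1) => ((f' j : N) : M)) :=
      f'.linearIndependent.map' N.subtype (Submodule.ker_subtype N)
    have hvNKind : LinearIndependent R vNK := by
      apply LinearIndependent.of_comp (K.subtype.comp NK.subtype)
      exact hindM.comp Fin.succ (Fin.succ_injective _)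
    have hvNKspan : ⊤ ≤ Submodule.span R (Set.range vNK) := by
      rintro ⟨⟨x, hxK⟩, hxN⟩ _
      have hxN' : x ∈ N := hxN
      have hphix : φ x = 0 := (hmemK x).1 hxK
      set c := f'.repr ⟨x, hxN'⟩ with hcdef
      have hsum : (⟨x, hxN'⟩ : N) = ∑ j, c j • f' j := (Module.Basis.sum_repr f' _).symm
      have hphisum : φ x = c 0 * gN := by
        have h1 := congrArg (φ.comp N.subtype) hsum
        simp only [map_sum, _root_.map_smul] at h1
        rw [LinearMap.comp_apply] at h1
        have h2 : ∀ j : Fin (n+1), c j • (φ.comp N.subtype) (f' j)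
            = c j • φ ((f' j : N) : M) := fun j => rfl
        rw [Fin.sum_univ_succ] at h1
        have h3 : ∀ k : Fin n, c k.succ • (φ.comp N.subtype) (f' k.succ) = 0 := by
          intro k
          rw [show (φ.comp N.subtype) (f' k.succ) = 0 from hf'ker k.succ (Fin.succ_ne_zero k),
            smul_zero]
        rw [Finset.sum_congr rfl fun k _ => h3 k] at h1
        simpa [hf'0, smul_eq_mul] using h1
      have hc0 : c 0 = 0 := by
        rcases mul_eq_zero.1 (hphisum ▸ hphix) with h | h
        · exact h
        · exact absurd h hgN0
      have hxs : x = ∑ k : Fin n, c k.succ • ((f' k.succ : N) : M) := by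
        have h1 := congrArg (Submodule.subtype N) hsum
        simp only [map_sum, _root_.map_smul] at h1
        rw [Fin.sum_univ_succ, hc0, zero_smul, zero_add] at h1
        exact h1
      have heq : (⟨⟨x, hxK⟩, hxN⟩ : NK) = ∑ k, c k.succ • vNK k := by
        apply Subtype.ext
        apply Subtype.ext
        rw [Submodule.coe_sum]
        simp only [SetLike.val_smul]
        rw [Submodule.coe_sum]
        simp only [SetLike.val_smul, hvNKdef]
        exact hxs
      rw [heq]
      exact Submodule.sum_mem _ fun k _ =>
        Submodule.smul_mem _ _ (Submodule.subset_span ⟨k, rfl⟩)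
    set fK : Module.Basis (Fin n) R NK := Module.Basis.mk hvNKind hvNKspan with hfKdef
    -- induction hypothesis
    obtain ⟨ehat, fhat, lam', hl0, hlch, hlf⟩ := ih ↥K m' (by omega) eK NK fK
    -- final basis of M
    set EF : Fin (m'+1) → M := Fin.cons y' (fun k => ((ehat k : K) : M)) with hEFdef
    have htailK : ∀ k : Fin m', ((ehat k : K) : M) ∈ K := fun k => (ehat k).2
    have htailind : LinearIndependent R (fun k : Fin m' => ((ehat k : K) : M)) :=
      ehat.linearIndependent.map' K.subtype (Submodule.ker_subtype K)
    have hEind : LinearIndependent R EF := by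
      apply LinearIndependent.fin_cons' y' _ htailind
      intro c z hz hsum
      have hzK : (z : M) ∈ K := by
        have hle : Submodule.span R (Set.range fun k : Fin m' => ((ehat k : K) : M)) ≤ K := by
          apply Submodule.span_le.2
          rintro w ⟨k, rfl⟩
          exact htailK k
        exact hle hz
      have := congrArg φ hsum
      rw [map_add, _root_.map_smul, hφy', smul_eq_mul, mul_one, (hmemK _).1 hzK, add_zero, map_zero]
        at this
      exact this
    have hEspan : ⊤ ≤ Submodule.span R (Set.range EF) := by
      intro x _
      have hker : x - φ x • y' ∈ K := by
        rw [hmemK, map_sub, _root_.map_smul, hφy', smul_eq_mul, mul_one, sub_self]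
      have hKeq : (K : Submodule R M) = Submodule.span R (Set.range fun k : Fin m' => ((ehat k : K) : M)) := by
        have h1 : (Set.range fun k : Fin m' => ((ehat k : K) : M)) = K.subtype '' Set.range ehat := by
          rw [← Set.range_comp]
          rfl
        rw [h1, Submodule.span_image, Module.Basis.span_eq, Submodule.map_top, Submodule.range_subtype]
      have h2 : x = φ x • y' + (x - φ x • y') := by abel
      rw [h2]
      apply Submodule.add_mem
      · exact Submodule.smul_mem _ _ (Submodule.subset_span ⟨0, by rw [hEFdef, Fin.cons_zero]⟩)
      · have h3 : x - φ x • y' ∈ Submodule.span R (Set.range fun k : Fin m' => ((ehat k : K) : M)) := by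
          rw [← hKeq]; exact hker
        refine Submodule.span_mono ?_ h3
        rintro w ⟨k, rfl⟩
        exact ⟨k.succ, by rw [hEFdef, Fin.cons_succ]⟩
    set E : Module.Basis (Fin (m'+1)) R M := Module.Basis.mk hEind hEspan with hEdef
    have hE0 : E 0 = y' := by rw [hEdef, Module.Basis.mk_apply, hEFdef, Fin.cons_zero]
    have hEs : ∀ k : Fin m', E k.succ = ((ehat k : K) : M) := by
      intro k
      rw [hEdef, Module.Basis.mk_apply, hEFdef, Fin.cons_succ]
    -- final basis of N
    have hfhatN : ∀ k : Fin n, (((fhat k : NK) : K) : M) ∈ N := fun k => (fhat k).2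
    set FF : Fin (n+1) → N := Fin.cons (f' 0) (fun k => ⟨(((fhat k : NK) : K) : M), hfhatN k⟩)
      with hFFdef
    have htailNM : LinearIndependent R (fun k : Fin n => (((fhat k : NK) : K) : M)) := by
      have hinj : Function.Injective (K.subtype.comp NK.subtype) := by
        have : ⇑(K.subtype.comp NK.subtype) = (Subtype.val : K → M) ∘ (Subtype.val : NK → K) := rfl
        rw [this]
        exact Subtype.val_injective.comp Subtype.val_injective
      exact fhat.linearIndependent.map' (K.subtype.comp NK.subtype)
        (LinearMap.ker_eq_bot_of_injective hinj)
    have hFindM : LinearIndependent R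
        (Fin.cons y (fun k : Fin n => (((fhat k : NK) : K) : M)) : Fin (n+1) → M) := by
      apply LinearIndependent.fin_cons' y _ htailNM
      intro c z hz hsum
      have hzK : (z : M) ∈ K := by
        have hle : Submodule.span R (Set.range fun k : Fin n => (((fhat k : NK) : K) : M)) ≤ K := by
          apply Submodule.span_le.2
          rintro w ⟨k, rfl⟩
          exact ((fhat k : NK) : K).2
        exact hle hz
      have := congrArg φ hsum
      rw [map_add, _root_.map_smul, hφy, smul_eq_mul, (hmemK _).1 hzK, add_zero, map_zero] at this
      rcases mul_eq_zero.1 this with h | h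
      · exact h
      · exact absurd h hgN0
    have hFind : LinearIndependent R FF := by
      apply LinearIndependent.of_comp N.subtype
      have hcomp : (⇑N.subtype ∘ FF)
          = (Fin.cons y (fun k : Fin n => (((fhat k : NK) : K) : M)) : Fin (n+1) → M) := by
        funext j
        induction j using Fin.cases with
        | zero => rw [Function.comp_apply, hFFdef, Fin.cons_zero, Fin.cons_zero]; rfl
        | succ k =>
          rw [Function.comp_apply, hFFdef, Fin.cons_succ, Fin.cons_succ]
          rfl
      rw [hcomp]
      exact hFindM
    have hFspan : ⊤ ≤ Submodule.span R (Set.range FF) := by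
      rintro ⟨x, hxN⟩ _
      have hφxd : ∃ c₀, φ x = gN * c₀ := by
        obtain ⟨c₀, hc₀⟩ := Ideal.mem_span_singleton'.1 (hI1 (hφI x hxN))
        exact ⟨c₀, by rw [← hc₀]; ring⟩
      obtain ⟨c₀, hc₀⟩ := hφxd
      have hzN : x - c₀ • y ∈ N := Submodule.sub_mem _ hxN (Submodule.smul_mem _ _ hyN)
      have hzK : x - c₀ • y ∈ K := by
        rw [hmemK, map_sub, _root_.map_smul, hφy, hc₀, smul_eq_mul]
        ring
      set zNK : NK := ⟨⟨x - c₀ • y, hzK⟩, hzN⟩ with hzNKdef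
      set d := fhat.repr zNK with hddef
      have hzsum : zNK = ∑ k, d k • fhat k := (Module.Basis.sum_repr fhat _).symm
      have hzsum' : x - c₀ • y = ∑ k, d k • (((fhat k : NK) : K) : M) := by
        have h1 := congrArg (fun w : NK => (((w : K) : M))) hzsum
        show ((zNK : K) : M) = _
        rw [h1]
        rw [Submodule.coe_sum]
        simp only [SetLike.val_smul]
        rw [Submodule.coe_sum]
        simp only [SetLike.val_smul]
      have heq : (⟨x, hxN⟩ : N) = c₀ • FF 0 + ∑ k, d k • FF k.succ := by
        apply Subtype.ext
        rw [Submodule.coe_add, SetLike.val_smul, Submodule.coe_sum]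
        simp only [SetLike.val_smul]
        have hFF0 : ((FF 0 : N) : M) = y := by rw [hFFdef, Fin.cons_zero]
        have hFFs : ∀ k : Fin n, ((FF k.succ : N) : M) = (((fhat k : NK) : K) : M) := by
          intro k; rw [hFFdef, Fin.cons_succ]
        rw [hFF0, Finset.sum_congr rfl fun k _ => by rw [hFFs k]]
        have : x = c₀ • y + (x - c₀ • y) := by abel
        rw [this, hzsum']
      rw [heq]
      exact Submodule.add_mem _
        (Submodule.smul_mem _ _ (Submodule.subset_span ⟨0, rfl⟩))
        (Submodule.sum_mem _ fun k _ =>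
          Submodule.smul_mem _ _ (Submodule.subset_span ⟨k.succ, rfl⟩))
    set F : Module.Basis (Fin (n+1)) R N := Module.Basis.mk hFind hFspan with hFdef
    have hF0 : F 0 = f' 0 := by rw [hFdef, Module.Basis.mk_apply, hFFdef, Fin.cons_zero]
    have hFs : ∀ k : Fin n, ((F k.succ : N) : M) = (((fhat k : NK) : K) : M) := by
      intro k
      rw [hFdef, Module.Basis.mk_apply, hFFdef, Fin.cons_succ]
    -- the chain elements
    set lam : Fin (n+1) → R := Fin.cons gN lam' with hlamdef
    have hlam0 : lam 0 = gN := by rw [hlamdef, Fin.cons_zero]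
    have hlams : ∀ k : Fin n, lam k.succ = lam' k := by
      intro k; rw [hlamdef, Fin.cons_succ]
    -- coordinates of N-elements wrt E lie in I
    have hreprIE : ∀ x, x ∈ N → ∀ k, E.repr x k ∈ I := by
      intro x hx k
      have h1 : x = ∑ j, bM.repr x j • bM j := (Module.Basis.sum_repr bM x).symm
      have h2 : E.repr x k = ∑ j, bM.repr x j * E.repr (bM j) k := by
        conv_lhs => rw [h1]
        rw [map_sum, Finsupp.finset_sum_apply]
        apply Finset.sum_congr rfl
        intro j _
        rw [_root_.map_smul, Finsupp.smul_apply, smul_eq_mul]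
      rw [h2]
      exact Ideal.sum_mem _ fun j _ => Ideal.mul_mem_right _ _ (hcoordI x hx j)
    -- the key relation coerced into M
    have hrelM : ∀ k : Fin n,
        (((fhat k : NK) : K) : M) = lam' k • ((ehat (Fin.castLE (by omega) k) : K) : M) := by
      intro k
      have h1 := hlf k
      calc (((fhat k : NK) : K) : M)
          = ((lam' k • ehat (Fin.castLE (by omega) k) : K) : M) := by rw [h1]
      _ = lam' k • ((ehat (Fin.castLE (by omega) k) : K) : M) := by rw [Submodule.coe_smul]
    refine ⟨E, F, lam, ?_, ?_, ?_⟩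
    · intro i
      induction i using Fin.cases with
      | zero => rw [hlam0]; exact hgN0
      | succ k => rw [hlams k]; exact hl0 k
    · intro i h
      induction i using Fin.cases with
      | zero =>
        have hn1 : 0 < n := by
          have : (0 : Fin (n+1)).val + 1 < n + 1 := h
          omega
        set j0 : Fin n := ⟨0, hn1⟩ with hj0
        have hidx : (⟨(0 : Fin (n+1)).val + 1, h⟩ : Fin (n+1)) = j0.succ := by
          apply Fin.ext
          simp [hj0]
        rw [hidx, hlams j0, hlam0]
        -- gN ∣ lam' j0
        set x : M := (((fhat j0 : NK) : K) : M) with hxdef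
        have hxN : x ∈ N := hfhatN j0
        set idx : Fin (m'+1) := (Fin.castLE (by omega) j0).succ with hidxdef
        have hxE : x = lam' j0 • E idx := by
          rw [hxdef, hrelM j0, hidxdef, hEs]
        have hrepr : E.repr x idx = lam' j0 := by
          rw [hxE, _root_.map_smul, Module.Basis.repr_self, Finsupp.smul_apply, smul_eq_mul,
            Finsupp.single_eq_same, mul_one]
        have hmem : lam' j0 ∈ Ideal.span ({gN} : Set R) := by
          rw [← hrepr]
          exact hI1 (hreprIE x hxN idx)
        exact Ideal.mem_span_singleton.1 hmem
      | succ j =>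
        have hj : (j : ℕ) + 1 < n := by
          have : (j.succ : Fin (n+1)).val + 1 < n + 1 := h
          simp [Fin.val_succ] at this
          omega
        have hidx : (⟨(j.succ : Fin (n+1)).val + 1, h⟩ : Fin (n+1))
            = (⟨(j : ℕ) + 1, hj⟩ : Fin n).succ := by
          apply Fin.ext
          simp [Fin.val_succ]
        rw [hidx, hlams, hlams]
        exact hlch j hj
    · intro i
      induction i using Fin.cases with
      | zero =>
        have hcast : Fin.castLE hnm (0 : Fin (n+1)) = (0 : Fin (m'+1)) := rfl
        rw [hcast, hE0, hlam0, hF0]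
        exact hgy'.symm
      | succ k =>
        have hcast : Fin.castLE hnm k.succ = (Fin.castLE (by omega : n ≤ m') k).succ := by
          apply Fin.ext
          simp [Fin.val_succ]
        rw [hcast, hFs k, hrelM k, hlams k, hEs]

end ED


/-- Elementary divisor theorem over adequate rings, Helmer.
Let `R` be an adequate integral domain: (1) every finitely generated ideal is principal
(Bézout), and (2) for all `a b : R` with `a ≠ 0` there is a factorization `a = a₁ * a₂` with
`(a₁, b) = R` and `(a₃, b) ≠ R` for every non-unit factor `a₃` of `a₂`.  Then for every pair
of finite free `R`-modules `N ⊆ M` of ranks `n ≤ m` there are a basis `e` of `M`, a basis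
`f` of `N`, and nonzero elements `λ₁ ∣ λ₂ ∣ … ∣ λₙ` of `R` with `f i = λ i • e i`. -/
theorem elementary_divisors_of_adequate
    (R : Type*) [CommRing R] [IsDomain R] [IsBezout R]
    (hAdequate : ∀ a b : R, a ≠ 0 → ∃ a₁ a₂ : R, a = a₁ * a₂ ∧
      Ideal.span {a₁, b} = ⊤ ∧
      ∀ a₃ : R, ¬ IsUnit a₃ → a₃ ∣ a₂ → Ideal.span {a₃, b} ≠ ⊤)
    (M : Type*) [AddCommGroup M] [Module R M]
    (n m : ℕ) (hnm : n ≤ m)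
    (bM : Module.Basis (Fin m) R M) (N : Submodule R M) (bN : Module.Basis (Fin n) R N) :
    ∃ (e : Module.Basis (Fin m) R M) (f : Module.Basis (Fin n) R N) (lam : Fin n → R),
      (∀ i, lam i ≠ 0) ∧
      (∀ i : Fin n, ∀ h : (i : ℕ) + 1 < n, lam i ∣ lam ⟨(i : ℕ) + 1, h⟩) ∧
      (∀ i : Fin n, ((f i : M) : M) = lam i • e (Fin.castLE hnm i)) := by
  exact mainED hAdequate n M m hnm bM N bN
end

section
/- Let 𝒪 be a ring with a complete multiplicative non-archimedean norm |·| and r ∈ ℚ_{>0}. Define on R = 𝒪((S)) (finite-tailed Laurent series) the norm |Σ aₙ Sⁿ|_r = sup_n |aₙ| · |p|^{rn}, and let R₀^{†,r} = { f ∈ 𝒪{{S}} : f = Σ_{n∈ℤ} aₙSⁿ, |aₙSⁿ|_r → 0 as n → -∞, and |f|_r ≤ 1 }. Then the topology on R₀^{†,r} defined by |·|_r coincides with the (p, S)-adic topology. -/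
/-!
**Statement 4.**  Let `𝒪` be a Cohen ring (complete discrete valuation ring with uniformizer
`p`) of a field of characteristic `p`, with the norm `|·|` corresponding to the `p`-adic
valuation.  On `R = 𝒪((S))` define `|∑ aₙSⁿ|_r = sup |aₙ|·|p|^{rn}` and let
`R₀^{†,r} = {f ∈ 𝒪{{S}} : |aₙSⁿ|_r → 0 (n → -∞), |f|_r ≤ 1}`.  Then the topology of
`R₀^{†,r}` defined by `|·|_r` coincides with the `(p, S)`-adic topology.

We model `𝒪{{S}}` axiomatically by its coefficient functions (see `LaurentModel`), and the
statement "the two topologies coincide" is expressed by mutual cofinality of the two systems of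
neighbourhoods of `0`: every `(p,S)`-adic neighbourhood contains a norm ball, and conversely.
-/

structure LaurentModel (O : Type*) [CommRing O] (P : Ideal O)
    (A : Type*) [CommRing A] where
  emb : O →+* A
  S : A
  isUnit_S : IsUnit S
  coeff : A → ℤ → O
  coeff_add : ∀ x y n, coeff (x + y) n = coeff x n + coeff y n
  coeff_emb_mul : ∀ c x n, coeff (emb c * x) n = c * coeff x n
  coeff_S_mul : ∀ x n, coeff (S * x) n = coeff x (n - 1)
  coeff_one : ∀ n, coeff 1 n = if n = 0 then 1 else 0
  decay : ∀ x, ∀ k : ℕ, ∃ N : ℤ, ∀ n : ℤ, n ≤ N → coeff x n ∈ P ^ k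
  coeff_injective : ∀ x y, (∀ n, coeff x n = coeff y n) → x = y
  coeff_surjective : ∀ a : ℤ → O, (∀ k : ℕ, ∃ N : ℤ, ∀ n : ℤ, n ≤ N → a n ∈ P ^ k) →
    ∃ x, ∀ n, coeff x n = a n
  coeff_mul : ∀ x y, ∀ n : ℤ, ∀ k : ℕ, ∃ N : ℕ, ∀ M : ℕ, N ≤ M →
    coeff (x * y) n - ∑ i ∈ Finset.Icc (-(M : ℤ)) (M : ℤ), coeff x i * coeff y (n - i) ∈ P ^ k

/-- `|aₙ Sⁿ|_r → 0` as `n → -∞`: the series converges on the annulus `0 < v_p(S) ≤ r`. -/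
def LaurentModel.Overconvergent {O : Type*} [CommRing O] {P : Ideal O}
    {A : Type*} [CommRing A] (M : LaurentModel O P A) (r : ℚ) (x : A) : Prop :=
  ∀ C : ℕ, ∃ N : ℕ, ∀ n : ℤ, n ≤ -(N : ℤ) →
    M.coeff x n ∈ P ^ ((⌈(C : ℚ) + r * (-n)⌉).toNat)

/-- `|x|_r ≤ |p|^c`, i.e. `v(aₙ) + r·n ≥ c` for all `n ∈ ℤ` (valuations measured by
powers of the maximal ideal `P = (p)`). -/
def LaurentModel.NormLe {O : Type*} [CommRing O] {P : Ideal O}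
    {A : Type*} [CommRing A] (M : LaurentModel O P A) (r : ℚ) (x : A) (c : ℚ) : Prop :=
  ∀ n : ℤ, M.coeff x n ∈ P ^ ((⌈c - r * n⌉).toNat)

namespace LaurentModel

section Basic

variable {O : Type*} [CommRing O] {P : Ideal O} {A : Type*} [CommRing A]
variable (M : LaurentModel O P A)

lemma coeff_zero (n : ℤ) : M.coeff 0 n = 0 := by
  have h := M.coeff_add 0 0 n
  rw [add_zero] at h
  exact (left_eq_add.mp h)

lemma coeff_neg (x : A) (n : ℤ) : M.coeff (-x) n = -M.coeff x n := by
  have h := M.coeff_add x (-x) n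
  rw [add_neg_cancel, M.coeff_zero] at h
  exact eq_neg_of_add_eq_zero_right h.symm

lemma coeff_emb (c : O) (n : ℤ) :
    M.coeff (M.emb c) n = c * (if n = 0 then 1 else 0) := by
  have h := M.coeff_emb_mul c 1 n
  rw [mul_one, M.coeff_one] at h
  exact h

lemma coeff_S (n : ℤ) : M.coeff M.S n = if n = 1 then 1 else 0 := by
  have h := M.coeff_S_mul 1 n
  rw [mul_one, M.coeff_one] at h
  rw [h]
  by_cases hn : n = 1 <;> simp [hn, sub_eq_zero]

lemma mem_pow_mono {a : O} {m k : ℕ} (h : a ∈ P ^ m) (hk : k ≤ m) : a ∈ P ^ k :=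
  Ideal.pow_le_pow_right hk h

lemma mul_mem_ceil {a b : O} {u v w : ℚ}
    (ha : a ∈ P ^ (⌈u⌉).toNat) (hb : b ∈ P ^ (⌈v⌉).toNat) (h : w ≤ u + v) :
    a * b ∈ P ^ (⌈w⌉).toNat := by
  have h1 : a * b ∈ P ^ ((⌈u⌉).toNat + (⌈v⌉).toNat) := by
    rw [pow_add]; exact Ideal.mul_mem_mul ha hb
  have h2 : ⌈w⌉ ≤ ⌈u⌉ + ⌈v⌉ := le_trans (Int.ceil_le_ceil h) (Int.ceil_add_le u v)
  exact mem_pow_mono h1 (by omega)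

lemma coeff_mul_mem {x y : A} {n : ℤ} {t : ℕ}
    (h : ∀ i : ℤ, M.coeff x i * M.coeff y (n - i) ∈ P ^ t) :
    M.coeff (x * y) n ∈ P ^ t := by
  obtain ⟨N, hN⟩ := M.coeff_mul x y n t
  have h1 := hN N le_rfl
  have h2 : ∑ i ∈ Finset.Icc (-(N : ℤ)) (N : ℤ), M.coeff x i * M.coeff y (n - i) ∈ P ^ t :=
    Ideal.sum_mem _ fun i _ => h i
  have h3 := (P ^ t).add_mem h1 h2
  rwa [sub_add_cancel] at h3

lemma normLe_mono {x : A} {r c c' : ℚ} (hcc : c' ≤ c) (h : M.NormLe r x c) :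
    M.NormLe r x c' := by
  intro n
  exact mem_pow_mono (h n) (by
    have : ⌈c' - r * n⌉ ≤ ⌈c - r * n⌉ := Int.ceil_le_ceil (by linarith)
    omega)

lemma normLe_mul {x y : A} {r c₁ c₂ : ℚ} (hx : M.NormLe r x c₁) (hy : M.NormLe r y c₂) :
    M.NormLe r (x * y) (c₁ + c₂) := by
  intro n
  exact M.coeff_mul_mem fun i =>
    mul_mem_ceil (hx i) (hy (n - i)) (le_of_eq (by push_cast; ring))

lemma normLe_add {x y : A} {r c : ℚ} (hx : M.NormLe r x c) (hy : M.NormLe r y c) :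
    M.NormLe r (x + y) c := fun n => by
  rw [M.coeff_add]; exact add_mem (hx n) (hy n)

lemma normLe_neg {x : A} {r c : ℚ} (hx : M.NormLe r x c) : M.NormLe r (-x) c := fun n => by
  rw [M.coeff_neg]; exact neg_mem (hx n)

lemma overconv_add {x y : A} {r : ℚ} (hx : M.Overconvergent r x) (hy : M.Overconvergent r y) :
    M.Overconvergent r (x + y) := by
  intro C
  obtain ⟨Nx, hNx⟩ := hx C
  obtain ⟨Ny, hNy⟩ := hy C
  refine ⟨max Nx Ny, fun n hn => ?_⟩
  have h1 : n ≤ -(Nx : ℤ) := le_trans hn (by push_cast; omega)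
  have h2 : n ≤ -(Ny : ℤ) := le_trans hn (by push_cast; omega)
  rw [M.coeff_add]
  exact add_mem (hNx n h1) (hNy n h2)

lemma overconv_neg {x : A} {r : ℚ} (hx : M.Overconvergent r x) :
    M.Overconvergent r (-x) := by
  intro C
  obtain ⟨Nx, hNx⟩ := hx C
  exact ⟨Nx, fun n hn => by rw [M.coeff_neg]; exact neg_mem (hNx n hn)⟩

lemma overconv_mul {x y : A} {r : ℚ} (hx : M.Overconvergent r x) (hy : M.Overconvergent r y)
    (hx0 : M.NormLe r x 0) (hy0 : M.NormLe r y 0) :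
    M.Overconvergent r (x * y) := by
  intro C
  obtain ⟨Nx, hNx⟩ := hx C
  obtain ⟨Ny, hNy⟩ := hy C
  refine ⟨Nx + Ny, fun n hn => ?_⟩
  apply M.coeff_mul_mem
  intro i
  by_cases hi : i ≤ -(Nx : ℤ)
  · exact mul_mem_ceil (hNx i hi) (hy0 (n - i)) (le_of_eq (by push_cast; ring))
  · have h2 : n - i ≤ -(Ny : ℤ) := by push_cast at hn ⊢; omega
    have := mul_mem_ceil (hx0 i) (hNy _ h2) (w := (C : ℚ) + r * (-n))
      (le_of_eq (by push_cast; ring))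
    exact this

lemma overconv_zero (r : ℚ) : M.Overconvergent r 0 :=
  fun _ => ⟨0, fun n _ => by rw [M.coeff_zero]; exact zero_mem _⟩

lemma overconv_one (r : ℚ) : M.Overconvergent r 1 := by
  intro C
  refine ⟨1, fun n hn => ?_⟩
  rw [M.coeff_one, if_neg (by omega : ¬ n = 0)]
  exact zero_mem _

lemma normLe_zero' (r c : ℚ) : M.NormLe r 0 c := fun n => by
  rw [M.coeff_zero]; exact zero_mem _

lemma normLe_one (r : ℚ) : M.NormLe r 1 0 := by
  intro n
  rw [M.coeff_one]
  by_cases hn : n = 0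
  · subst hn
    simp
  · rw [if_neg hn]; exact zero_mem _

/-- The unit ball of the overconvergent subring. -/
def ocSubring (r : ℚ) : Subring A where
  carrier := {x | M.Overconvergent r x ∧ M.NormLe r x 0}
  zero_mem' := ⟨M.overconv_zero r, M.normLe_zero' r 0⟩
  one_mem' := ⟨M.overconv_one r, M.normLe_one r⟩
  add_mem' := fun hx hy => ⟨M.overconv_add hx.1 hy.1, M.normLe_add hx.2 hy.2⟩
  neg_mem' := fun hx => ⟨M.overconv_neg hx.1, M.normLe_neg hx.2⟩
  mul_mem' := fun hx hy => ⟨M.overconv_mul hx.1 hy.1 hx.2 hy.2,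
    by simpa using M.normLe_mul hx.2 hy.2⟩

lemma mem_ocSubring {r : ℚ} {x : A} :
    x ∈ M.ocSubring r ↔ M.Overconvergent r x ∧ M.NormLe r x 0 := Iff.rfl

/-- The "norm ≤ |p|^c" ideal of the unit ball. -/
def normLeIdeal (r c : ℚ) : Ideal (M.ocSubring r) where
  carrier := {x | M.NormLe r (x : A) c}
  zero_mem' := M.normLe_zero' r c
  add_mem' := fun {x y} hx hy => by
    show M.NormLe r ((x : A) + (y : A)) c
    exact M.normLe_add hx hy
  smul_mem' := fun b x hx => by
    show M.NormLe r ((b : A) * (x : A)) c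
    simpa using M.normLe_mul b.2.2 hx

lemma mem_normLeIdeal {r c : ℚ} {x : M.ocSubring r} :
    x ∈ M.normLeIdeal r c ↔ M.NormLe r (x : A) c := Iff.rfl

lemma normLeIdeal_mul_le (r a b : ℚ) :
    M.normLeIdeal r a * M.normLeIdeal r b ≤ M.normLeIdeal r (a + b) := by
  rw [Ideal.mul_le]
  intro x hx y hy
  show M.NormLe r ((x : A) * (y : A)) (a + b)
  exact M.normLe_mul hx hy

end Basic

section DVR

variable {O : Type*} [CommRing O] [IsDomain O] {p₀ : O} {A : Type*} [CommRing A]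
variable (M : LaurentModel O (Ideal.span {p₀}) A)

lemma mem_pow_of_mul_mem (hp₀ : p₀ ≠ 0) {t : O} {k : ℕ}
    (h : p₀ * t ∈ Ideal.span {p₀} ^ (k + 1)) : t ∈ Ideal.span {p₀} ^ k := by
  rw [Ideal.span_singleton_pow, Ideal.mem_span_singleton] at h ⊢
  obtain ⟨s, hs⟩ := h
  refine ⟨s, mul_left_cancel₀ hp₀ ?_⟩
  rw [hs]; ring

lemma dirA (hp₀ : p₀ ≠ 0) {r : ℚ} (hr : 0 < r)
    (hpB : M.emb p₀ ∈ M.ocSubring r) (hSB : M.S ∈ M.ocSubring r) :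
    ∀ (k : ℕ) (x : M.ocSubring r), M.NormLe r (x : A) (k * (1 + r)) →
      x ∈ (Ideal.span {(⟨M.emb p₀, hpB⟩ : M.ocSubring r), ⟨M.S, hSB⟩}) ^ k := by
  classical
  set I := Ideal.span {(⟨M.emb p₀, hpB⟩ : M.ocSubring r), (⟨M.S, hSB⟩ : M.ocSubring r)} with hI
  intro k
  induction k with
  | zero => intro x _; simp
  | succ k ih =>
    intro x hx
    set c : ℚ := ((k + 1 : ℕ) : ℚ) * (1 + r) with hc
    have hcexp : c = (k : ℚ) * (1 + r) + 1 + r := by rw [hc]; push_cast; ring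
    have hck : (0 : ℚ) ≤ (k : ℚ) * (1 + r) := by positivity
    have hc1 : (1 : ℚ) ≤ c := by rw [hcexp]; linarith
    have hoc : M.Overconvergent r (x : A) := x.2.1
    -- divisibility of the nonpositive coefficients
    have hge : ∀ n : ℤ, n ≤ 0 → (1 : ℤ) ≤ ⌈c - r * n⌉ := by
      intro n hn
      have hrn : r * (n : ℚ) ≤ 0 :=
        mul_nonpos_of_nonneg_of_nonpos hr.le (by exact_mod_cast hn)
      have : (1 : ℚ) ≤ c - r * n := by linarith
      exact_mod_cast le_trans this (Int.le_ceil _)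
    have hdvd : ∀ n : ℤ, n ≤ 0 → ∃ t, M.coeff (x : A) n = p₀ * t := by
      intro n hn
      have h1 := mem_pow_mono (hx n) (k := 1) (by have := hge n hn; omega)
      rw [pow_one, Ideal.mem_span_singleton] at h1
      exact h1
    choose a1' ha1' using hdvd
    set a1 : ℤ → O := fun n => if h : n ≤ 0 then a1' n h else 0 with ha1def
    have ha1 : ∀ n : ℤ, n ≤ 0 → M.coeff (x : A) n = p₀ * a1 n := by
      intro n h
      rw [ha1def]; simp only [dif_pos h]; exact ha1' n h
    have ha1mem : ∀ (n : ℤ), n ≤ 0 → ∀ m : ℕ,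
        M.coeff (x : A) n ∈ Ideal.span {p₀} ^ (m + 1) → a1 n ∈ Ideal.span {p₀} ^ m := by
      intro n h m hm
      exact mem_pow_of_mul_mem hp₀ (by rw [← ha1 n h]; exact hm)
    set a2 : ℤ → O := fun n => if 0 ≤ n then M.coeff (x : A) (n + 1) else 0 with ha2def
    obtain ⟨x₁, hx₁⟩ := M.coeff_surjective a1 (by
      intro k'
      obtain ⟨N, hN⟩ := M.decay (x : A) (k' + 1)
      refine ⟨min N 0, fun n hn => ?_⟩
      exact ha1mem n (le_trans hn (min_le_right _ _))
        k' (hN n (le_trans hn (min_le_left _ _))))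
    obtain ⟨x₂, hx₂⟩ := M.coeff_surjective a2 (by
      intro k'
      refine ⟨-1, fun n hn => ?_⟩
      rw [ha2def]; simp only [if_neg (by omega : ¬ (0:ℤ) ≤ n)]; exact zero_mem _)
    -- norm bound for x₁
    have hx₁N : M.NormLe r x₁ (c - 1) := by
      intro n
      rw [hx₁ n]
      by_cases h : n ≤ 0
      · have hm := hx n
        have hceil : ⌈c - 1 - r * n⌉ = ⌈c - r * n⌉ - 1 := by
          rw [show c - 1 - r * (n : ℚ) = (c - r * n) - 1 by ring, Int.ceil_sub_one]
        have h2 := hge n h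
        have hE : (⌈c - r * n⌉).toNat = (⌈c - 1 - r * n⌉).toNat + 1 := by omega
        exact ha1mem n h _ (by rw [← hE]; exact hm)
      · rw [ha1def]; simp only [dif_neg h]; exact zero_mem _
    -- overconvergence of x₁
    have hx₁O : M.Overconvergent r x₁ := by
      intro C
      obtain ⟨N, hN⟩ := hoc (C + 1)
      refine ⟨N + 1, fun n hn => ?_⟩
      have hn0 : n ≤ 0 := by push_cast at hn; omega
      have hm := hN n (by push_cast at hn ⊢; omega)
      rw [hx₁ n]
      have hceil : ⌈((C + 1 : ℕ) : ℚ) + r * (-(n:ℚ))⌉ = ⌈(C : ℚ) + r * (-(n:ℚ))⌉ + 1 := by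
        rw [show ((C + 1 : ℕ) : ℚ) + r * (-(n:ℚ)) = ((C : ℚ) + r * (-(n:ℚ))) + 1
          by push_cast; ring, Int.ceil_add_one]
      have hnn : 0 ≤ ⌈(C : ℚ) + r * (-(n:ℚ))⌉ := by
        apply Int.ceil_nonneg
        have h1 : (0 : ℚ) ≤ -(n:ℚ) := by exact_mod_cast (by omega : (0:ℤ) ≤ -n)
        have h2 : (0 : ℚ) ≤ r * (-(n:ℚ)) := mul_nonneg hr.le h1
        positivity
      have hE : (⌈((C + 1 : ℕ) : ℚ) + r * (-(n:ℚ))⌉).toNat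
          = (⌈(C : ℚ) + r * (-(n:ℚ))⌉).toNat + 1 := by omega
      exact ha1mem n hn0 _ (by rw [← hE]; exact hm)
    -- norm bound for x₂
    have hx₂N : M.NormLe r x₂ (c - r) := by
      intro n
      rw [hx₂ n, ha2def]
      by_cases h : (0 : ℤ) ≤ n
      · simp only [if_pos h]
        have hm := hx (n + 1)
        have hE : c - r - r * (n : ℚ) = c - r * ((n + 1 : ℤ) : ℚ) := by push_cast; ring
        rw [hE]
        exact hm
      · simp only [if_neg h]; exact zero_mem _
    -- overconvergence of x₂
    have hx₂O : M.Overconvergent r x₂ := by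
      intro C
      refine ⟨1, fun n hn => ?_⟩
      rw [hx₂ n, ha2def]
      simp only [if_neg (by push_cast at hn; omega : ¬ (0:ℤ) ≤ n)]
      exact zero_mem _
    -- the decomposition
    have heq : (x : A) = M.emb p₀ * x₁ + M.S * x₂ := by
      apply M.coeff_injective
      intro n
      rw [M.coeff_add, M.coeff_emb_mul, M.coeff_S_mul, hx₁ n, hx₂ (n - 1)]
      by_cases h : n ≤ 0
      · rw [ha2def]
        simp only [if_neg (by omega : ¬ (0:ℤ) ≤ n - 1)]
        rw [add_zero]
        exact ha1 n h
      · rw [ha1def, ha2def]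
        simp only [dif_neg h, if_pos (by omega : (0:ℤ) ≤ n - 1), mul_zero, zero_add,
          sub_add_cancel]
    have hx₁B : x₁ ∈ M.ocSubring r :=
      ⟨hx₁O, M.normLe_mono (by linarith) hx₁N⟩
    have hx₂B : x₂ ∈ M.ocSubring r :=
      ⟨hx₂O, M.normLe_mono (by linarith) hx₂N⟩
    have hk1 : (⟨x₁, hx₁B⟩ : M.ocSubring r) ∈ I ^ k :=
      ih ⟨x₁, hx₁B⟩ (M.normLe_mono (by rw [hcexp] at *; linarith) hx₁N)
    have hk2 : (⟨x₂, hx₂B⟩ : M.ocSubring r) ∈ I ^ k :=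
      ih ⟨x₂, hx₂B⟩ (M.normLe_mono (by rw [hcexp] at *; linarith) hx₂N)
    have hxe : x = (⟨M.emb p₀, hpB⟩ : M.ocSubring r) * ⟨x₁, hx₁B⟩
        + (⟨M.S, hSB⟩ : M.ocSubring r) * ⟨x₂, hx₂B⟩ := by
      apply Subtype.ext
      push_cast
      exact heq
    rw [hxe, pow_succ' I k]
    exact Ideal.add_mem _
      (Ideal.mul_mem_mul (Ideal.subset_span (by simp)) hk1)
      (Ideal.mul_mem_mul (Ideal.subset_span (by simp)) hk2)

end DVR

end LaurentModel


/-- On the unit ball `R₀^{†,r}` of the overconvergent ring, the topology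
defined by `|·|_r` coincides with the `(p, S)`-adic topology. -/
theorem norm_topology_eq_adic_topology
    (p : ℕ) [Fact p.Prime]
    (O : Type*) [CommRing O] [IsDomain O] [IsDiscreteValuationRing O]
    (hp : Irreducible (p : O)) [IsAdicComplete (Ideal.span {(p : O)}) O]
    (A : Type*) [CommRing A] (M : LaurentModel O (Ideal.span {(p : O)}) A)
    (r : ℚ) (hr : 0 < r) :
    ∃ B : Subring A,
      (B : Set A) = {x : A | M.Overconvergent r x ∧ M.NormLe r x 0} ∧
      ∃ (hpB : M.emb (p : O) ∈ B) (hSB : M.S ∈ B),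
        (∀ k : ℕ, ∃ c : ℚ, ∀ x : B, M.NormLe r (x : A) c →
          x ∈ (Ideal.span {(⟨M.emb (p : O), hpB⟩ : B), (⟨M.S, hSB⟩ : B)}) ^ k) ∧
        (∀ c : ℚ, ∃ k : ℕ, ∀ x : B,
          x ∈ (Ideal.span {(⟨M.emb (p : O), hpB⟩ : B), (⟨M.S, hSB⟩ : B)}) ^ k →
          M.NormLe r (x : A) c) := by
  classical
  have hp0 : ((p : ℕ) : O) ≠ 0 := hp.ne_zero
  have hpB : M.emb (p : O) ∈ M.ocSubring r := by
    constructor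
    · intro C
      refine ⟨1, fun n hn => ?_⟩
      rw [M.coeff_emb, if_neg (by push_cast at hn; omega : ¬ n = 0), mul_zero]
      exact zero_mem _
    · intro n
      rw [M.coeff_emb]
      by_cases hn : n = 0
      · subst hn; simp
      · rw [if_neg hn, mul_zero]; exact zero_mem _
  have hSB : M.S ∈ M.ocSubring r := by
    constructor
    · intro C
      refine ⟨0, fun n hn => ?_⟩
      rw [M.coeff_S, if_neg (by push_cast at hn; omega : ¬ n = 1)]
      exact zero_mem _
    · intro n
      rw [M.coeff_S]
      by_cases hn : n = 1
      · subst hn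
        have h1 : ⌈(0:ℚ) - r * ((1:ℤ):ℚ)⌉ ≤ 0 := by
          apply Int.ceil_le.mpr
          push_cast
          linarith
        have h2 : (⌈(0:ℚ) - r * ((1:ℤ):ℚ)⌉).toNat = 0 := by omega
        rw [if_pos rfl, h2, pow_zero]
        simp
      · rw [if_neg hn]; exact zero_mem _
  refine ⟨M.ocSubring r, rfl, hpB, hSB, ?_, ?_⟩
  · intro k
    exact ⟨k * (1 + r), fun x hx => M.dirA hp0 hr hpB hSB k x hx⟩
  · intro c
    set m : ℚ := min 1 r with hm
    have hm0 : 0 < m := lt_min one_pos hr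
    have hm1 : m ≤ 1 := min_le_left _ _
    have hmr : m ≤ r := min_le_right _ _
    refine ⟨(⌈c / m⌉).toNat, fun x hxk => ?_⟩
    have hIle : Ideal.span {(⟨M.emb (p : O), hpB⟩ : M.ocSubring r), ⟨M.S, hSB⟩}
        ≤ M.normLeIdeal r m := by
      rw [Ideal.span_le]
      rintro y hy
      rcases hy with rfl | rfl
      · show M.NormLe r (M.emb (p : O)) m
        intro n
        rw [M.coeff_emb]
        by_cases hn : n = 0
        · subst hn
          have hE : m - r * (((0:ℤ)):ℚ) = m := by push_cast; ring
          rw [hE]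
          have hle : ⌈m⌉ ≤ 1 := Int.ceil_le.mpr (by exact_mod_cast hm1)
          have hge : (0:ℤ) < ⌈m⌉ := by exact_mod_cast lt_of_lt_of_le hm0 (Int.le_ceil m)
          have : (⌈m⌉).toNat = 1 := by omega
          rw [if_pos rfl, this, pow_one, mul_one]
          exact Ideal.mem_span_singleton_self _
        · rw [if_neg hn, mul_zero]; exact zero_mem _
      · show M.NormLe r M.S m
        intro n
        rw [M.coeff_S]
        by_cases hn : n = 1
        · subst hn
          have h1 : ⌈m - r * ((1:ℤ):ℚ)⌉ ≤ 0 := by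
            apply Int.ceil_le.mpr
            push_cast
            linarith
          have h2 : (⌈m - r * ((1:ℤ):ℚ)⌉).toNat = 0 := by omega
          rw [if_pos rfl, h2, pow_zero]
          simp
        · rw [if_neg hn]; exact zero_mem _
    have hpow : ∀ k : ℕ, (M.normLeIdeal r m) ^ k ≤ M.normLeIdeal r (k * m) := by
      intro k
      induction k with
      | zero =>
        intro y _
        show M.NormLe r (y : A) (((0:ℕ):ℚ) * m)
        rw [Nat.cast_zero, zero_mul]
        exact y.2.2
      | succ k ih =>
        have hEq : (((k+1:ℕ)):ℚ) * m = (k:ℚ) * m + m := by push_cast; ring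
        calc (M.normLeIdeal r m) ^ (k+1) = (M.normLeIdeal r m) ^ k * M.normLeIdeal r m := by
              rw [pow_succ]
          _ ≤ M.normLeIdeal r ((k:ℚ) * m) * M.normLeIdeal r m := Ideal.mul_mono ih le_rfl
          _ ≤ M.normLeIdeal r ((k:ℚ) * m + m) := M.normLeIdeal_mul_le r _ _
          _ = M.normLeIdeal r (((k+1:ℕ) : ℚ) * m) := by rw [hEq]
    have h1 : x ∈ M.normLeIdeal r (((⌈c / m⌉).toNat : ℚ) * m) :=
      hpow _ (Ideal.pow_right_mono hIle _ hxk)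
    have hck : c ≤ ((⌈c / m⌉).toNat : ℚ) * m := by
      have h2 : c / m ≤ ((⌈c / m⌉).toNat : ℚ) := by
        have h3 := Int.le_ceil (c / m)
        have h4 : (⌈c/m⌉ : ℚ) ≤ (((⌈c/m⌉).toNat : ℤ) : ℚ) := by
          exact_mod_cast Int.self_le_toNat _
        push_cast at h4
        linarith
      calc c = (c / m) * m := by field_simp
        _ ≤ ((⌈c / m⌉).toNat : ℚ) * m := mul_le_mul_of_nonneg_right h2 hm0.le
    exact M.normLe_mono hck h1
end

section
/- Let 𝒪 be a Cohen ring of a field k of characteristic p, and R⁺ = 𝒪[[S]]. Call a prime ideal 𝔭 of R⁺ Eisenstein if it is generated by an Eisenstein polynomial P(S) = S^e + a_{e-1}S^{e-1} + … + a₀ with p | a_i for all i and p² ∤ a₀ (with deg 𝔭 = e, and 𝔭 = (p) with deg = ∞ allowed). Let 𝔭, 𝔮 be Eisenstein primes. For x ∈ R⁺, if min(v_{κ(𝔭)}(x mod 𝔭), v_{κ(𝔮)}(x mod 𝔮)) < min(deg 𝔭, deg 𝔮), then v_{κ(𝔭)}(x mod 𝔭) = v_{κ(𝔮)}(x mod 𝔮).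 -/
open PowerSeries

/-- `𝔭` is an Eisenstein prime ideal of `R⁺ = 𝒪⟦S⟧` of degree `e : ℕ∞`: either `𝔭 = (p)`
(with `deg = ∞`), or `𝔭` is generated by an Eisenstein polynomial
`P(S) = S^e + a_{e-1}S^{e-1} + ⋯ + a₀` with `p ∣ aᵢ` for all `i` and `p² ∤ a₀`. -/
def IsEisensteinPrimeOfDeg {O : Type*} [CommRing O] (p : ℕ)
    (𝔭 : Ideal (PowerSeries O)) (e : ℕ∞) : Prop :=
  (e = ⊤ ∧ 𝔭 = Ideal.span {((p : ℕ) : PowerSeries O)}) ∨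
  (∃ P : Polynomial O, P.Monic ∧ 0 < P.natDegree ∧
    (∀ i < P.natDegree, P.coeff i ∈ Ideal.span {(p : O)}) ∧
    P.coeff 0 ∉ (Ideal.span {(p : O)}) ^ 2 ∧
    e = (P.natDegree : ℕ∞) ∧
    𝔭 = Ideal.span {(Polynomial.coeToPowerSeries.ringHom P : PowerSeries O)})

/-- The normalized valuation of `x mod 𝔭` in the complete discrete valuation ring `R⁺/𝔭`
(whose uniformizer is the image of `S`), encoded as
`v_{κ(𝔭)}(x mod 𝔭) = sup {i : x ∈ 𝔭 + (Sⁱ)}`. -/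
noncomputable def eisensteinVal {O : Type*} [CommRing O]
    (𝔭 : Ideal (PowerSeries O)) (x : PowerSeries O) : ℕ∞ :=
  ⨆ i ∈ {i : ℕ | x ∈ 𝔭 ⊔ (Ideal.span {(PowerSeries.X : PowerSeries O)}) ^ i}, (i : ℕ∞)

lemma eis_ideal_eq {O : Type*} [CommRing O] [IsDomain O] [IsDiscreteValuationRing O]
    {p : ℕ} (hp : Irreducible (p : O))
    {𝔭 : Ideal (PowerSeries O)} {e : ℕ∞} (h𝔭 : IsEisensteinPrimeOfDeg p 𝔭 e)
    (i : ℕ) (hi : (i : ℕ∞) ≤ e) :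
    𝔭 ⊔ (Ideal.span {(X : PowerSeries O)}) ^ i
      = Ideal.span {((p : ℕ) : PowerSeries O)} ⊔ (Ideal.span {(X : PowerSeries O)}) ^ i := by
  rcases h𝔭 with ⟨-, rfl⟩ | ⟨P, hmon, hdeg, hcoef, h0, he, h𝔭eq⟩
  · rfl
  · subst he h𝔭eq
    set n := P.natDegree with hn
    have hin : i ≤ n := by exact_mod_cast hi
    have hdvd : ∀ j, j < n → (p : O) ∣ P.coeff j := fun j hj =>
      Ideal.mem_span_singleton.mp (hcoef j hj)
    set Q : PowerSeries O :=
      PowerSeries.mk (fun j => if h : j < n then (hdvd j h).choose else 0) with hQ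
    have hPQ : (C (p : O)) * Q = Polynomial.coeToPowerSeries.ringHom P - X ^ n := by
      ext j
      rw [map_sub, coeff_C_mul, hQ, coeff_mk]
      rcases lt_trichotomy j n with h | h | h
      · rw [dif_pos h, ← (hdvd j h).choose_spec, coeff_X_pow, if_neg h.ne,
          Polynomial.coeToPowerSeries.ringHom_apply, Polynomial.coeff_coe, sub_zero]
      · subst h
        rw [dif_neg (lt_irrefl _), coeff_X_pow, if_pos rfl, mul_zero,
          Polynomial.coeToPowerSeries.ringHom_apply, Polynomial.coeff_coe,
          hmon.coeff_natDegree, sub_self]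
      · rw [dif_neg (not_lt.mpr h.le), coeff_X_pow, if_neg h.ne', mul_zero,
          Polynomial.coeToPowerSeries.ringHom_apply, Polynomial.coeff_coe,
          Polynomial.coeff_eq_zero_of_natDegree_lt h, sub_zero]
    have hQunit : IsUnit Q := by
      rw [PowerSeries.isUnit_iff_constantCoeff]
      have hc0 : constantCoeff Q = (hdvd 0 hdeg).choose := by
        rw [hQ]; simp [coeff_zero_eq_constantCoeff.symm, dif_pos hdeg]
      rw [hc0]
      by_contra hnu
      apply h0
      have hmem : (hdvd 0 hdeg).choose ∈ IsLocalRing.maximalIdeal O := hnu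
      rw [hp.maximalIdeal_eq, Ideal.mem_span_singleton] at hmem
      rw [Ideal.span_singleton_pow, Ideal.mem_span_singleton]
      obtain ⟨c, hc⟩ := hmem
      exact ⟨c, by rw [(hdvd 0 hdeg).choose_spec, hc]; ring⟩
    have hpc : ((p : ℕ) : PowerSeries O) = C (p : O) := by
      rw [map_natCast]
    have hXn : (X : PowerSeries O) ^ n ∈ (Ideal.span {(X : PowerSeries O)}) ^ i := by
      rw [Ideal.span_singleton_pow, Ideal.mem_span_singleton]
      exact ⟨X ^ (n - i), by rw [← pow_add, Nat.add_sub_cancel' hin]⟩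
    apply le_antisymm
    · apply sup_le _ le_sup_right
      rw [Ideal.span_le, Set.singleton_subset_iff]
      have : (Polynomial.coeToPowerSeries.ringHom P : PowerSeries O)
          = C (p : O) * Q + X ^ n := by rw [hPQ]; ring
      rw [SetLike.mem_coe, this]
      refine Ideal.add_mem _ (Ideal.mem_sup_left ?_) (Ideal.mem_sup_right hXn)
      rw [hpc, Ideal.mem_span_singleton]
      exact ⟨Q, rfl⟩
    · apply sup_le _ le_sup_right
      rw [Ideal.span_le, Set.singleton_subset_iff, SetLike.mem_coe, hpc]
      obtain ⟨u, hu⟩ := hQunit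
      rw [← hu] at hPQ
      have hCp : C (p : O)
          = (Polynomial.coeToPowerSeries.ringHom P - X ^ n) * (↑u⁻¹ : PowerSeries O) := by
        rw [← hPQ, mul_assoc, Units.mul_inv, mul_one]
      rw [hCp]
      refine Ideal.mul_mem_right _ _ (Ideal.sub_mem _ (Ideal.mem_sup_left ?_)
        (Ideal.mem_sup_right hXn))
      exact Ideal.subset_span rfl

lemma eis_le {O : Type*} [CommRing O] (𝔭 : Ideal (PowerSeries O)) (x : PowerSeries O)
    (n : ℕ) (h : x ∈ 𝔭 ⊔ (Ideal.span {(X : PowerSeries O)}) ^ n) :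
    (n : ℕ∞) ≤ eisensteinVal 𝔭 x :=
  le_iSup₂ (f := fun (i : ℕ) (_ : i ∈ {i : ℕ | x ∈ 𝔭 ⊔ (Ideal.span {(X : PowerSeries O)}) ^ i}) => (i : ℕ∞)) n h

lemma eis_mem {O : Type*} [CommRing O] (𝔭 : Ideal (PowerSeries O)) (x : PowerSeries O)
    (n : ℕ) (h : (n : ℕ∞) ≤ eisensteinVal 𝔭 x) :
    x ∈ 𝔭 ⊔ (Ideal.span {(X : PowerSeries O)}) ^ n := by
  rcases Nat.eq_zero_or_pos n with rfl | hn
  · simp [Ideal.one_eq_top]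
  · by_contra hc
    have hb : ∀ i ∈ {i : ℕ | x ∈ 𝔭 ⊔ (Ideal.span {(X : PowerSeries O)}) ^ i}, i < n := by
      intro i hi
      by_contra hni
      exact hc ((sup_le_sup_left (Ideal.pow_le_pow_right (not_lt.mp hni)) 𝔭) hi)
    have : eisensteinVal 𝔭 x ≤ ((n - 1 : ℕ) : ℕ∞) := by
      refine iSup₂_le fun i hi => ?_
      exact_mod_cast Nat.le_pred_of_lt (hb i hi)
    have h2 : (n : ℕ∞) ≤ ((n - 1 : ℕ) : ℕ∞) := h.trans this
    have : n ≤ n - 1 := by exact_mod_cast h2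
    omega

lemma eis_key {O : Type*} [CommRing O] [IsDomain O] [IsDiscreteValuationRing O]
    {p : ℕ} (hp : Irreducible (p : O))
    {𝔭 𝔮 : Ideal (PowerSeries O)} {e f : ℕ∞}
    (h𝔭 : IsEisensteinPrimeOfDeg p 𝔭 e) (h𝔮 : IsEisensteinPrimeOfDeg p 𝔮 f)
    (x : PowerSeries O)
    (hAe : eisensteinVal 𝔭 x < e) (hAf : eisensteinVal 𝔭 x < f) :
    eisensteinVal 𝔮 x ≤ eisensteinVal 𝔭 x := by
  obtain ⟨n, hA⟩ : ∃ n : ℕ, eisensteinVal 𝔭 x = (n : ℕ∞) := by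
    lift eisensteinVal 𝔭 x to ℕ using hAe.ne_top with n hn
    exact ⟨n, rfl⟩
  by_contra hAB
  have hlt : eisensteinVal 𝔭 x < eisensteinVal 𝔮 x := not_le.mp hAB
  have h1 : ((n + 1 : ℕ) : ℕ∞) ≤ eisensteinVal 𝔮 x := by
    push_cast
    rw [ENat.add_one_le_iff (by simp)]
    exact hA ▸ hlt
  have h1e : ((n + 1 : ℕ) : ℕ∞) ≤ e := by
    push_cast
    rw [ENat.add_one_le_iff (by simp)]
    exact hA ▸ hAe
  have h1f : ((n + 1 : ℕ) : ℕ∞) ≤ f := by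
    push_cast
    rw [ENat.add_one_le_iff (by simp)]
    exact hA ▸ hAf
  have hx : x ∈ 𝔮 ⊔ (Ideal.span {(X : PowerSeries O)}) ^ (n + 1) := eis_mem _ _ _ h1
  rw [eis_ideal_eq hp h𝔮 (n + 1) h1f, ← eis_ideal_eq hp h𝔭 (n + 1) h1e] at hx
  have := eis_le 𝔭 x (n + 1) hx
  rw [hA] at this
  exact absurd this (by exact_mod_cast Nat.not_succ_le_self n)

/-- Let `𝒪` be a Cohen ring of a field of characteristic `p` (a complete
discrete valuation ring with uniformizer `p`), `R⁺ = 𝒪⟦S⟧`, and let `𝔭, 𝔮` be Eisenstein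
prime ideals of `R⁺` of degrees `e, f ∈ ℕ∞`.  For `x ∈ R⁺`, if
`min(v_{κ(𝔭)}(x mod 𝔭), v_{κ(𝔮)}(x mod 𝔮)) < min(deg 𝔭, deg 𝔮)` then
`v_{κ(𝔭)}(x mod 𝔭) = v_{κ(𝔮)}(x mod 𝔮)`. -/
theorem eisenstein_valuation_transfer
    (p : ℕ) [Fact p.Prime]
    (O : Type*) [CommRing O] [IsDomain O] [IsDiscreteValuationRing O]
    (hp : Irreducible (p : O)) [IsAdicComplete (Ideal.span {(p : O)}) O]
    (𝔭 𝔮 : Ideal (PowerSeries O)) (e f : ℕ∞)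
    (h𝔭 : IsEisensteinPrimeOfDeg p 𝔭 e) (h𝔮 : IsEisensteinPrimeOfDeg p 𝔮 f)
    (x : PowerSeries O)
    (hlt : min (eisensteinVal 𝔭 x) (eisensteinVal 𝔮 x) < min e f) :
    eisensteinVal 𝔭 x = eisensteinVal 𝔮 x := by
  rcases le_total (eisensteinVal 𝔭 x) (eisensteinVal 𝔮 x) with h | h
  · have hm : eisensteinVal 𝔭 x < min e f := by rwa [min_eq_left h] at hlt
    exact le_antisymm h
      (eis_key hp h𝔭 h𝔮 x (hm.trans_le (min_le_left _ _)) (hm.trans_le (min_le_right _ _)))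
  · have hm : eisensteinVal 𝔮 x < min e f := by rwa [min_eq_right h] at hlt
    exact le_antisymm
      (eis_key hp h𝔮 h𝔭 x (hm.trans_le (min_le_right _ _)) (hm.trans_le (min_le_left _ _))) h
end
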